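/- arXiv:1411.7204 — 3 statements merged into one kernel-verified Lean document; each statement's English description precedes it below -/
import Mathlib

section
/- Let (H,α) be a monoidal Hom-Hopf algebra, (A,β) a right (H,α)-Hom-comodule algebra, and (M,μ) a right (A,β)-Hom-module. Then the k-module M⊗H equipped with the automorphism μ⊗α, the right (A,β)-action (m⊗h)·a = m·a_(0) ⊗ h a_(1), and the right (H,α)-coaction ρ(m⊗h) = (μ⁻¹(m)⊗h_(1)) ⊗ α(h_(2)), is a relative Hom-Hopf module. -/
/- Preliminaries: monoidal Hom-structures (Caenepeel–Goyvaerts style), following the paper. -/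

open TensorProduct

noncomputable section

universe u v

/-- A monoidal Hom-algebra `(A, β)`. -/
structure HomAlgebra (k : Type v) (A : Type u) [CommRing k] [AddCommGroup A] [Module k A] where
  aut : A ≃ₗ[k] A
  mul : A →ₗ[k] A →ₗ[k] A
  one : A
  aut_mul : ∀ a b : A, aut (mul a b) = mul (aut a) (aut b)
  aut_one : aut one = one
  hom_assoc : ∀ a b c : A, mul (aut a) (mul b c) = mul (mul a b) (aut c)
  one_mul : ∀ a : A, mul one a = aut a
  mul_one : ∀ a : A, mul a one = aut a

/-- The bilinear map on tensor products induced by two bilinear maps: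
`(m ⊗ n, p ⊗ q) ↦ f m p ⊗ g n q`. -/
def biTensor {k : Type v} [CommRing k] {M N P Q R S : Type*}
    [AddCommGroup M] [Module k M] [AddCommGroup N] [Module k N]
    [AddCommGroup P] [Module k P] [AddCommGroup Q] [Module k Q]
    [AddCommGroup R] [Module k R] [AddCommGroup S] [Module k S]
    (f : M →ₗ[k] P →ₗ[k] R) (g : N →ₗ[k] Q →ₗ[k] S) :
    M ⊗[k] N →ₗ[k] P ⊗[k] Q →ₗ[k] R ⊗[k] S :=
  (TensorProduct.homTensorHomMap (RingHom.id k) P Q R S).comp (TensorProduct.map f g)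

/-- A monoidal Hom-Hopf algebra `(H, α, S)`. -/
structure HomHopfAlgebra (k : Type v) (H : Type u) [CommRing k] [AddCommGroup H] [Module k H]
    extends HomAlgebra k H where
  comul : H →ₗ[k] H ⊗[k] H
  counit : H →ₗ[k] k
  comul_aut : ∀ h, comul (aut h) = TensorProduct.map aut.toLinearMap aut.toLinearMap (comul h)
  counit_aut : ∀ h, counit (aut h) = counit h
  hom_coassoc : ∀ h, TensorProduct.map aut.symm.toLinearMap comul (comul h)
      = TensorProduct.assoc k H H H (TensorProduct.map comul aut.toLinearMap (comul h))
  counit_comul_left : ∀ h,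
      TensorProduct.lid k H (TensorProduct.map counit LinearMap.id (comul h)) = aut.symm h
  counit_comul_right : ∀ h,
      TensorProduct.rid k H (TensorProduct.map LinearMap.id counit (comul h)) = aut.symm h
  comul_mul : ∀ a b, comul (mul a b) = biTensor mul mul (comul a) (comul b)
  comul_one : comul one = one ⊗ₜ[k] one
  counit_mul : ∀ a b, counit (mul a b) = counit a * counit b
  counit_one : counit one = 1
  antipode : H →ₗ[k] H
  antipode_convolution : ∀ h,
      TensorProduct.lift mul (TensorProduct.map antipode LinearMap.id (comul h)) = counit h • one
  convolution_antipode : ∀ h,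
      TensorProduct.lift mul (TensorProduct.map LinearMap.id antipode (comul h)) = counit h • one
  antipode_aut : ∀ h, antipode (aut h) = aut (antipode h)

variable {k : Type v} [CommRing k]
variable {H : Type u} [AddCommGroup H] [Module k H]
variable {A : Type u} [AddCommGroup A] [Module k A]

/-- A right `(A, β)`-Hom-module `(M, μ)`. -/
structure HomModule (k : Type v) {A : Type u} [CommRing k] [AddCommGroup A] [Module k A]
    (Aa : HomAlgebra k A) (M : Type u) [AddCommGroup M] [Module k M] where
  aut : M ≃ₗ[k] M
  act : M →ₗ[k] A →ₗ[k] M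
  act_act : ∀ (m : M) (a b : A), act (act m a) (Aa.aut b) = act (aut m) (Aa.mul a b)
  act_one : ∀ m : M, act m Aa.one = aut m
  aut_act : ∀ (m : M) (a : A), aut (act m a) = act (aut m) (Aa.aut a)

/-- A right `(H, α)`-Hom-comodule `(M, μ)`. -/
structure HomComodule (k : Type v) {H : Type u} [CommRing k] [AddCommGroup H] [Module k H]
    (Hh : HomHopfAlgebra k H) (M : Type u) [AddCommGroup M] [Module k M] where
  aut : M ≃ₗ[k] M
  coact : M →ₗ[k] M ⊗[k] H
  coact_aut : ∀ m, coact (aut m) = TensorProduct.map aut.toLinearMap Hh.aut.toLinearMap (coact m)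
  counit_coact : ∀ m,
      TensorProduct.rid k M (TensorProduct.map LinearMap.id Hh.counit (coact m)) = aut.symm m
  hom_coassoc : ∀ m,
      TensorProduct.assoc k M H H (TensorProduct.map coact Hh.aut.symm.toLinearMap (coact m))
        = TensorProduct.map aut.symm.toLinearMap Hh.comul (coact m)

/-- A right `(H, α)`-Hom-comodule algebra `(A, β)`. -/
structure HomComoduleAlgebra (k : Type v) {H : Type u} [CommRing k] [AddCommGroup H] [Module k H]
    (Hh : HomHopfAlgebra k H) (A : Type u) [AddCommGroup A] [Module k A]
    extends HomAlgebra k A where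
  coact : A →ₗ[k] A ⊗[k] H
  coact_aut : ∀ a, coact (aut a) = TensorProduct.map aut.toLinearMap Hh.aut.toLinearMap (coact a)
  counit_coact : ∀ a,
      TensorProduct.rid k A (TensorProduct.map LinearMap.id Hh.counit (coact a)) = aut.symm a
  hom_coassoc : ∀ a,
      TensorProduct.assoc k A H H (TensorProduct.map coact Hh.aut.symm.toLinearMap (coact a))
        = TensorProduct.map aut.symm.toLinearMap Hh.comul (coact a)
  coact_mul : ∀ a b, coact (mul a b) = biTensor mul Hh.mul (coact a) (coact b)
  coact_one : coact one = one ⊗ₜ[k] Hh.one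

/-- A relative Hom-Hopf module `(M, μ)`. -/
structure RelHopfModule (k : Type v) {H A : Type u} [CommRing k]
    [AddCommGroup H] [Module k H] [AddCommGroup A] [Module k A]
    (Hh : HomHopfAlgebra k H) (AA : HomComoduleAlgebra k Hh A)
    (M : Type u) [AddCommGroup M] [Module k M] where
  aut : M ≃ₗ[k] M
  act : M →ₗ[k] A →ₗ[k] M
  act_act : ∀ (m : M) (a b : A), act (act m a) (AA.aut b) = act (aut m) (AA.mul a b)
  act_one : ∀ m : M, act m AA.one = aut m
  aut_act : ∀ (m : M) (a : A), aut (act m a) = act (aut m) (AA.aut a)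
  coact : M →ₗ[k] M ⊗[k] H
  coact_aut : ∀ m, coact (aut m) = TensorProduct.map aut.toLinearMap Hh.aut.toLinearMap (coact m)
  counit_coact : ∀ m,
      TensorProduct.rid k M (TensorProduct.map LinearMap.id Hh.counit (coact m)) = aut.symm m
  hom_coassoc : ∀ m,
      TensorProduct.assoc k M H H (TensorProduct.map coact Hh.aut.symm.toLinearMap (coact m))
        = TensorProduct.map aut.symm.toLinearMap Hh.comul (coact m)
  compat : ∀ (m : M) (a : A), coact (act m a) = biTensor act Hh.mul (coact m) (AA.coact a)

/-- The underlying Hom-module of a relative Hom-Hopf module. -/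
def RelHopfModule.toHomModule {Hh : HomHopfAlgebra k H} {AA : HomComoduleAlgebra k Hh A}
    {M : Type u} [AddCommGroup M] [Module k M] (T : RelHopfModule k Hh AA M) :
    HomModule k AA.toHomAlgebra M :=
  ⟨T.aut, T.act, T.act_act, T.act_one, T.aut_act⟩

/-- The underlying Hom-comodule of a relative Hom-Hopf module. -/
def RelHopfModule.toHomComodule {Hh : HomHopfAlgebra k H} {AA : HomComoduleAlgebra k Hh A}
    {M : Type u} [AddCommGroup M] [Module k M] (T : RelHopfModule k Hh AA M) :
    HomComodule k Hh M :=
  ⟨T.aut, T.coact, T.coact_aut, T.counit_coact, T.hom_coassoc⟩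

/-- A total integral `φ : (H, α) → (A, β)`. -/
structure TotalIntegral (k : Type v) {H A : Type u} [CommRing k]
    [AddCommGroup H] [Module k H] [AddCommGroup A] [Module k A]
    (Hh : HomHopfAlgebra k H) (AA : HomComoduleAlgebra k Hh A) where
  toFun : H →ₗ[k] A
  colinear : ∀ h, AA.coact (toFun h) = TensorProduct.map toFun LinearMap.id (Hh.comul h)
  commutes : ∀ h, toFun (Hh.aut h) = AA.aut (toFun h)
  normal : toFun Hh.one = AA.one

/-- The `(A, β)`-action on `M ⊗ H` of the right adjoint `G`:
`(m ⊗ h) · a = m · a₍₀₎ ⊗ h a₍₁₎`. -/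
def Gact {M : Type u} [AddCommGroup M] [Module k M]
    (Hh : HomHopfAlgebra k H) (AA : HomComoduleAlgebra k Hh A)
    (act : M →ₗ[k] A →ₗ[k] M) : (M ⊗[k] H) →ₗ[k] A →ₗ[k] (M ⊗[k] H) :=
  (biTensor act Hh.mul).compl₂ AA.coact

/-- The `(H, α)`-coaction on `M ⊗ H` of the right adjoint `G`:
`ρ(m ⊗ h) = (μ⁻¹(m) ⊗ h₍₁₎) ⊗ α(h₍₂₎)`. -/
def Gcoact {M : Type u} [AddCommGroup M] [Module k M]
    (Hh : HomHopfAlgebra k H) (autM : M ≃ₗ[k] M) :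
    M ⊗[k] H →ₗ[k] (M ⊗[k] H) ⊗[k] H :=
  ((TensorProduct.assoc k M H H).symm.toLinearMap).comp
    (TensorProduct.map autM.symm.toLinearMap
      ((TensorProduct.map LinearMap.id Hh.aut.toLinearMap).comp Hh.comul))

/-- The counit of the adjunction: `δ(n ⊗ h) = ε(h) n`. -/
def Gcounit (Hh : HomHopfAlgebra k H) (N : Type u) [AddCommGroup N] [Module k N] :
    N ⊗[k] H →ₗ[k] N :=
  (TensorProduct.rid k N).toLinearMap.comp (TensorProduct.map LinearMap.id Hh.counit)

/-- The map `λ_M : M ⊗ H → M`, `λ_M(m ⊗ h) = μ⁻¹(m₍₀₎) · φ(S(m₍₁₎) α(h))`. -/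
def lamMap {M : Type u} [AddCommGroup M] [Module k M]
    {Hh : HomHopfAlgebra k H} {AA : HomComoduleAlgebra k Hh A}
    (φ : H →ₗ[k] A) (T : RelHopfModule k Hh AA M) : M ⊗[k] H →ₗ[k] M :=
  (TensorProduct.lift T.act).comp
    ((TensorProduct.map T.aut.symm.toLinearMap
        (φ.comp ((TensorProduct.lift Hh.mul).comp
          (TensorProduct.map Hh.antipode Hh.aut.toLinearMap)))).comp
      (((TensorProduct.assoc k M H H).toLinearMap).comp
        (TensorProduct.map T.coact LinearMap.id)))

/-- The trace map `m ↦ m₍₀₎ · φ(S(m₍₁₎))` (for any Hom-action `act` and Hom-coaction `coact`). -/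
def traceMap {M : Type u} [AddCommGroup M] [Module k M]
    (S : H →ₗ[k] H) (φ : H →ₗ[k] A)
    (act : M →ₗ[k] A →ₗ[k] M) (coact : M →ₗ[k] M ⊗[k] H) : M →ₗ[k] M :=
  (TensorProduct.lift act).comp
    ((TensorProduct.map LinearMap.id (φ.comp S)).comp coact)

/-- A normalized `(A, β)`-integral `θ : H ⊗ H → A`. -/
structure NormalizedIntegral (k : Type v) {H A : Type u} [CommRing k]
    [AddCommGroup H] [Module k H] [AddCommGroup A] [Module k A]
    (Hh : HomHopfAlgebra k H) (AA : HomComoduleAlgebra k Hh A) where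
  θ : H ⊗[k] H →ₗ[k] A
  commutes : ∀ x, θ (TensorProduct.map Hh.aut.toLinearMap Hh.aut.toLinearMap x) = AA.aut (θ x)
  /-- `θ(α⁻¹(g) ⊗ h₍₁₎) ⊗ α(h₍₂₎) = β(θ(g₍₂₎ ⊗ α⁻¹(h))₍₀₎) ⊗ g₍₁₎ θ(g₍₂₎ ⊗ α⁻¹(h))₍₁₎`. -/
  cond1 : ∀ g h : H,
    TensorProduct.map θ Hh.aut.toLinearMap
        ((TensorProduct.assoc k H H H).symm (Hh.aut.symm g ⊗ₜ[k] Hh.comul h))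
      = TensorProduct.lift
          ((TensorProduct.homTensorHomMap (RingHom.id k) A H A H).comp
            (((TensorProduct.mk k (A →ₗ[k] A) (H →ₗ[k] H)) AA.aut.toLinearMap).comp Hh.mul))
          (TensorProduct.map LinearMap.id
            (AA.coact.comp (θ.comp ((TensorProduct.mk k H H).flip (Hh.aut.symm h))))
            (Hh.comul g))
  /-- `θ(h₍₁₎ ⊗ h₍₂₎) = ε(h) 1_A`. -/
  cond2 : ∀ h : H, θ (Hh.comul h) = Hh.counit h • AA.one
  /-- `β²(a₍₀₎₍₀₎) θ(α⁻¹(g) a₍₀₎₍₁₎ ⊗ α⁻¹(h) α⁻¹(a₍₁₎)) = θ(g ⊗ h) a`. -/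
  cond3 : ∀ (g h : H) (a : A),
    TensorProduct.lift AA.mul
      (TensorProduct.map (AA.aut.toLinearMap.comp AA.aut.toLinearMap)
          (θ.comp (TensorProduct.map (Hh.mul (Hh.aut.symm g)) (Hh.mul (Hh.aut.symm h))))
        (TensorProduct.assoc k A H H
          (TensorProduct.map AA.coact Hh.aut.symm.toLinearMap (AA.coact a))))
      = AA.mul (θ (g ⊗ₜ[k] h)) a

/-- The map `ν_M : M ⊗ H → M`, `ν_M(m ⊗ h) = μ(m₍₀₎) · θ(m₍₁₎ ⊗ α⁻¹(h))`. -/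
def nuMap {M : Type u} [AddCommGroup M] [Module k M]
    {Hh : HomHopfAlgebra k H} {AA : HomComoduleAlgebra k Hh A}
    (θ : H ⊗[k] H →ₗ[k] A) (T : RelHopfModule k Hh AA M) : M ⊗[k] H →ₗ[k] M :=
  (TensorProduct.lift T.act).comp
    ((TensorProduct.map T.aut.toLinearMap
        (θ.comp (TensorProduct.map LinearMap.id Hh.aut.symm.toLinearMap))).comp
      (((TensorProduct.assoc k M H H).toLinearMap).comp
        (TensorProduct.map T.coact LinearMap.id)))

/-- The `(A, β)`-action on `M ⊗ A`: `(m ⊗ a) · b = μ⁻¹(m) ⊗ a β(b)`. -/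
def MAact {M : Type u} [AddCommGroup M] [Module k M]
    {Hh : HomHopfAlgebra k H} (AA : HomComoduleAlgebra k Hh A)
    (autM : M ≃ₗ[k] M) : (M ⊗[k] A) →ₗ[k] A →ₗ[k] (M ⊗[k] A) :=
  (((TensorProduct.homTensorHomMap (RingHom.id k) M A M A).comp
    (((((TensorProduct.mk k (M →ₗ[k] M) (A →ₗ[k] A)) autM.symm.toLinearMap).comp
      AA.mul.flip).comp AA.aut.toLinearMap)))).flip

/-- The `(H, α)`-coaction on `M ⊗ A`: `ρ(m ⊗ a) = (m₍₀₎ ⊗ a₍₀₎) ⊗ m₍₁₎ a₍₁₎`. -/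
def MAcoact {M : Type u} [AddCommGroup M] [Module k M]
    (Hh : HomHopfAlgebra k H) (AA : HomComoduleAlgebra k Hh A)
    (coactM : M →ₗ[k] M ⊗[k] H) : (M ⊗[k] A) →ₗ[k] (M ⊗[k] A) ⊗[k] H :=
  (TensorProduct.map LinearMap.id (TensorProduct.lift Hh.mul)).comp
    ((TensorProduct.tensorTensorTensorComm k M H A H).toLinearMap.comp
      (TensorProduct.map coactM AA.coact))

/-- The map `ξ : H ⊗ A → A ⊗ H`, `ξ(h ⊗ a) = β(a₍₀₎) ⊗ α⁻¹(h) a₍₁₎`. -/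
def xiMap (Hh : HomHopfAlgebra k H) (AA : HomComoduleAlgebra k Hh A) :
    H ⊗[k] A →ₗ[k] A ⊗[k] H :=
  (TensorProduct.lift ((TensorProduct.homTensorHomMap (RingHom.id k) A H A H).comp
      (((((TensorProduct.mk k (A →ₗ[k] A) (H →ₗ[k] H)) AA.aut.toLinearMap).comp
        Hh.mul).comp Hh.aut.symm.toLinearMap)))).comp
    (TensorProduct.map LinearMap.id AA.coact)

/-- Morphisms of right `(A, β)`-Hom-modules. -/
def IsHomModuleHom {M N : Type u} [AddCommGroup M] [Module k M] [AddCommGroup N] [Module k N]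
    {Aa : HomAlgebra k A} (Mm : HomModule k Aa M) (Nn : HomModule k Aa N)
    (f : M →ₗ[k] N) : Prop :=
  (∀ m, f (Mm.aut m) = Nn.aut (f m)) ∧ ∀ m a, f (Mm.act m a) = Nn.act (f m) a

/-- Morphisms of right `(H, α)`-Hom-comodules. -/
def IsHomComoduleHom {M N : Type u} [AddCommGroup M] [Module k M] [AddCommGroup N] [Module k N]
    {Hh : HomHopfAlgebra k H} (Mm : HomComodule k Hh M) (Nn : HomComodule k Hh N)
    (f : M →ₗ[k] N) : Prop :=
  (∀ m, f (Mm.aut m) = Nn.aut (f m)) ∧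
    Nn.coact.comp f = (TensorProduct.map f LinearMap.id).comp Mm.coact

/-- Morphisms of relative Hom-Hopf modules. -/
def IsRelHopfHom {M N : Type u} [AddCommGroup M] [Module k M] [AddCommGroup N] [Module k N]
    {Hh : HomHopfAlgebra k H} {AA : HomComoduleAlgebra k Hh A}
    (Mm : RelHopfModule k Hh AA M) (Nn : RelHopfModule k Hh AA N)
    (f : M →ₗ[k] N) : Prop :=
  (∀ m, f (Mm.aut m) = Nn.aut (f m)) ∧
    (∀ m a, f (Mm.act m a) = Nn.act (f m) a) ∧
    Nn.coact.comp f = (TensorProduct.map f LinearMap.id).comp Mm.coact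

end

section Statements

variable {k : Type v} [CommRing k] {H A : Type u}
  [AddCommGroup H] [Module k H] [AddCommGroup A] [Module k A]


namespace HopfAux

variable {k : Type v} [CommRing k]

theorem tmap_map {P Q R S P' Q' : Type*}
    [AddCommGroup P] [Module k P] [AddCommGroup Q] [Module k Q]
    [AddCommGroup R] [Module k R] [AddCommGroup S] [Module k S]
    [AddCommGroup P'] [Module k P'] [AddCommGroup Q'] [Module k Q']
    (f : P →ₗ[k] P') (g : Q →ₗ[k] Q') (f' : R →ₗ[k] P) (g' : S →ₗ[k] Q)
    (t : R ⊗[k] S) :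
    TensorProduct.map f g (TensorProduct.map f' g' t)
      = TensorProduct.map (f ∘ₗ f') (g ∘ₗ g') t := by
  rw [TensorProduct.map_comp, LinearMap.comp_apply]

theorem assoc_nat {P Q R P' Q' R' : Type*}
    [AddCommGroup P] [Module k P] [AddCommGroup Q] [Module k Q]
    [AddCommGroup R] [Module k R] [AddCommGroup P'] [Module k P']
    [AddCommGroup Q'] [Module k Q'] [AddCommGroup R'] [Module k R']
    (f : P →ₗ[k] P') (g : Q →ₗ[k] Q') (e : R →ₗ[k] R')
    (t : (P ⊗[k] Q) ⊗[k] R) :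
    TensorProduct.assoc k P' Q' R' (TensorProduct.map (TensorProduct.map f g) e t)
      = TensorProduct.map f (TensorProduct.map g e) (TensorProduct.assoc k P Q R t) := by
  have h : (TensorProduct.assoc k P' Q' R').toLinearMap ∘ₗ
      TensorProduct.map (TensorProduct.map f g) e
      = (TensorProduct.map f (TensorProduct.map g e)) ∘ₗ
        (TensorProduct.assoc k P Q R).toLinearMap :=
    TensorProduct.ext_threefold fun x y z => by simp
  exact LinearMap.congr_fun h t

theorem assoc_symm_nat {P Q R P' Q' R' : Type*}
    [AddCommGroup P] [Module k P] [AddCommGroup Q] [Module k Q]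
    [AddCommGroup R] [Module k R] [AddCommGroup P'] [Module k P']
    [AddCommGroup Q'] [Module k Q'] [AddCommGroup R'] [Module k R']
    (f : P →ₗ[k] P') (g : Q →ₗ[k] Q') (e : R →ₗ[k] R')
    (t : P ⊗[k] (Q ⊗[k] R)) :
    (TensorProduct.assoc k P' Q' R').symm
        (TensorProduct.map f (TensorProduct.map g e) t)
      = TensorProduct.map (TensorProduct.map f g) e
          ((TensorProduct.assoc k P Q R).symm t) := by
  have h : ((TensorProduct.assoc k P' Q' R').symm).toLinearMap ∘ₗ
      TensorProduct.map f (TensorProduct.map g e)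
      = (TensorProduct.map (TensorProduct.map f g) e) ∘ₗ
        ((TensorProduct.assoc k P Q R).symm).toLinearMap := by
    apply TensorProduct.ext'
    intro x t
    induction t using TensorProduct.induction_on with
    | zero => simp
    | tmul y z => simp
    | add y z hy hz => simp_all [tmul_add]
  exact LinearMap.congr_fun h t

theorem biTensor_tmul {P Q R S T U : Type u}
    [AddCommGroup P] [Module k P] [AddCommGroup Q] [Module k Q]
    [AddCommGroup R] [Module k R] [AddCommGroup S] [Module k S]
    [AddCommGroup T] [Module k T] [AddCommGroup U] [Module k U]
    (f : P →ₗ[k] R →ₗ[k] T) (g : Q →ₗ[k] S →ₗ[k] U)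
    (p : P) (q : Q) (r : R) (s : S) :
    biTensor f g (p ⊗ₜ[k] q) (r ⊗ₜ[k] s) = f p r ⊗ₜ[k] g q s := by
  simp [biTensor]

variable {H : Type u} [AddCommGroup H] [Module k H] (Hh : HomHopfAlgebra k H)

theorem counit_symm (h : H) : Hh.counit (Hh.aut.symm h) = Hh.counit h := by
  conv_rhs => rw [show h = Hh.aut (Hh.aut.symm h) by simp, Hh.counit_aut]

theorem comul_symm (h : H) :
    Hh.comul (Hh.aut.symm h)
      = TensorProduct.map Hh.aut.symm.toLinearMap Hh.aut.symm.toLinearMap (Hh.comul h) := by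
  have h1 := Hh.comul_aut (Hh.aut.symm h)
  rw [Hh.aut.apply_symm_apply] at h1
  have e2 := congrArg (TensorProduct.map Hh.aut.symm.toLinearMap Hh.aut.symm.toLinearMap) h1
  rw [tmap_map] at e2
  have : Hh.aut.symm.toLinearMap ∘ₗ Hh.aut.toLinearMap = LinearMap.id := by
    ext x; simp
  rw [this, TensorProduct.map_id, LinearMap.id_apply] at e2
  exact e2.symm

theorem square_comul (h : H) :
    TensorProduct.map LinearMap.id (Hh.aut.toLinearMap ∘ₗ Hh.aut.toLinearMap) (Hh.comul h)
      = Hh.comul h := by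
  classical
  set Λ : H ⊗[k] H →ₗ[k] H :=
    (TensorProduct.lid k H).toLinearMap ∘ₗ TensorProduct.map Hh.counit LinearMap.id with hΛ
  set Ψ : H ⊗[k] (H ⊗[k] H) →ₗ[k] H ⊗[k] H :=
    (TensorProduct.lid k (H ⊗[k] H)).toLinearMap ∘ₗ TensorProduct.map Hh.counit LinearMap.id
    with hΨ
  -- step1 : Ψ ∘ map α⁻¹ Δ = Δ ∘ Λ
  have step1 : ∀ t : H ⊗[k] H,
      Ψ (TensorProduct.map Hh.aut.symm.toLinearMap Hh.comul t) = Hh.comul (Λ t) := by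
    intro t
    induction t using TensorProduct.induction_on with
    | zero => simp
    | tmul x y => simp [hΨ, hΛ, counit_symm]
    | add x y hx hy => simp [map_add, hx, hy]
  -- step2 : Ψ ∘ assoc = map Λ id
  have step2 : ∀ t : (H ⊗[k] H) ⊗[k] H,
      Ψ (TensorProduct.assoc k H H H t) = TensorProduct.map Λ LinearMap.id t := by
    intro t
    induction t using TensorProduct.induction_on with
    | zero => simp
    | tmul x y =>
      induction x using TensorProduct.induction_on with
      | zero => simp
      | tmul u v => simp [hΨ, hΛ, TensorProduct.smul_tmul]
      | add u v hu hv => simp [map_add, add_tmul, hu, hv]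
    | add x y hx hy => simp [map_add, hx, hy]
  have lamcomul : ∀ x : H, Λ (Hh.comul x) = Hh.aut.symm x := fun x => Hh.counit_comul_left x
  have e := congrArg Ψ (Hh.hom_coassoc h)
  rw [step1, step2, lamcomul, comul_symm, tmap_map] at e
  have hΛΔ : Λ ∘ₗ Hh.comul = Hh.aut.symm.toLinearMap := LinearMap.ext lamcomul
  rw [hΛΔ, LinearMap.id_comp] at e
  -- e : map α⁻¹ α⁻¹ Δh = map α⁻¹ α Δh
  have e2 := congrArg (TensorProduct.map Hh.aut.toLinearMap Hh.aut.toLinearMap) e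
  rw [tmap_map, tmap_map] at e2
  have c1 : Hh.aut.toLinearMap ∘ₗ Hh.aut.symm.toLinearMap = LinearMap.id := by ext x; simp
  rw [c1, TensorProduct.map_id, LinearMap.id_apply] at e2
  exact e2.symm

theorem key_coassoc (h : H) :
    TensorProduct.map LinearMap.id (TensorProduct.map Hh.aut.toLinearMap LinearMap.id)
        (TensorProduct.assoc k H H H
          (TensorProduct.map Hh.comul LinearMap.id (Hh.comul h)))
      = TensorProduct.map Hh.aut.symm.toLinearMap
          (TensorProduct.map Hh.aut.toLinearMap Hh.aut.toLinearMap)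
          (TensorProduct.map LinearMap.id Hh.comul (Hh.comul h)) := by
  set a := Hh.aut.toLinearMap with ha
  set s := Hh.aut.symm.toLinearMap with hs
  set D := Hh.comul with hD
  have css : s ∘ₗ a = LinearMap.id := by ext x; simp [ha, hs]
  have csa : a ∘ₗ s = LinearMap.id := by ext x; simp [ha, hs]
  have caa : s ∘ₗ (a ∘ₗ a) = a := by ext x; simp [ha, hs]
  have cA : (TensorProduct.map a a) ∘ₗ D = D ∘ₗ a := LinearMap.ext fun x => (Hh.comul_aut x).symm
  have cS : D ∘ₗ s = (TensorProduct.map s s) ∘ₗ D := LinearMap.ext (comul_symm Hh)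
  have sqm : (TensorProduct.map LinearMap.id (a ∘ₗ a)) ∘ₗ D = D :=
    LinearMap.ext (square_comul Hh)
  have l2 : TensorProduct.map LinearMap.id a (D h)
      = TensorProduct.map a LinearMap.id (D (Hh.aut.symm h)) := by
    have t1 : TensorProduct.map a LinearMap.id (D (Hh.aut.symm h))
        = TensorProduct.map LinearMap.id s (D h) := by
      rw [comul_symm Hh, tmap_map, csa, LinearMap.id_comp]
    have t2 := congrArg (TensorProduct.map LinearMap.id s) (square_comul Hh h)
    rw [tmap_map, LinearMap.id_comp, caa] at t2
    rw [t1, ← t2]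
  have step : TensorProduct.map s (TensorProduct.map a a)
      (TensorProduct.map LinearMap.id D (D h))
      = TensorProduct.map LinearMap.id (TensorProduct.map s LinearMap.id)
        (TensorProduct.assoc k H H H (TensorProduct.map D LinearMap.id (D h))) := by
    calc TensorProduct.map s (TensorProduct.map a a) (TensorProduct.map LinearMap.id D (D h))
        = TensorProduct.map (s ∘ₗ LinearMap.id) ((TensorProduct.map a a) ∘ₗ D) (D h) :=
          tmap_map _ _ _ _ _
      _ = TensorProduct.map (s ∘ₗ LinearMap.id) (D ∘ₗ a) (D h) := by rw [cA]
      _ = TensorProduct.map s D (TensorProduct.map LinearMap.id a (D h)) :=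
          (tmap_map _ _ _ _ _).symm
      _ = TensorProduct.map s D (TensorProduct.map a LinearMap.id (D (Hh.aut.symm h))) := by
          rw [l2]
      _ = TensorProduct.map (s ∘ₗ a) (D ∘ₗ LinearMap.id) (D (Hh.aut.symm h)) :=
          tmap_map _ _ _ _ _
      _ = TensorProduct.map LinearMap.id D (D (Hh.aut.symm h)) := by
          rw [css, LinearMap.comp_id]
      _ = TensorProduct.map (a ∘ₗ s) (LinearMap.id ∘ₗ D) (D (Hh.aut.symm h)) := by
          rw [csa, LinearMap.id_comp]
      _ = TensorProduct.map a LinearMap.id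
            (TensorProduct.map s D (D (Hh.aut.symm h))) := (tmap_map _ _ _ _ _).symm
      _ = TensorProduct.map a LinearMap.id
            (TensorProduct.assoc k H H H
              (TensorProduct.map D a (D (Hh.aut.symm h)))) := by
          rw [Hh.hom_coassoc (Hh.aut.symm h)]
      _ = TensorProduct.map a LinearMap.id
            (TensorProduct.assoc k H H H
              (TensorProduct.map D a (TensorProduct.map s s (D h)))) := by
          rw [comul_symm Hh]
      _ = TensorProduct.map a LinearMap.id
            (TensorProduct.assoc k H H H
              (TensorProduct.map (D ∘ₗ s) (a ∘ₗ s) (D h))) := by rw [tmap_map]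
      _ = TensorProduct.map a LinearMap.id
            (TensorProduct.assoc k H H H
              (TensorProduct.map ((TensorProduct.map s s) ∘ₗ D) LinearMap.id (D h))) := by
          rw [← cS, csa]
      _ = TensorProduct.map a LinearMap.id
            (TensorProduct.assoc k H H H
              (TensorProduct.map (TensorProduct.map s s) LinearMap.id
                (TensorProduct.map D LinearMap.id (D h)))) := by
          rw [tmap_map, LinearMap.id_comp]
      _ = TensorProduct.map a LinearMap.id
            (TensorProduct.map s (TensorProduct.map s LinearMap.id)
              (TensorProduct.assoc k H H H (TensorProduct.map D LinearMap.id (D h)))) := by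
          rw [assoc_nat]
      _ = TensorProduct.map (a ∘ₗ s) (LinearMap.id ∘ₗ TensorProduct.map s LinearMap.id)
            (TensorProduct.assoc k H H H (TensorProduct.map D LinearMap.id (D h))) :=
          tmap_map _ _ _ _ _
      _ = TensorProduct.map LinearMap.id (TensorProduct.map s LinearMap.id)
            (TensorProduct.assoc k H H H (TensorProduct.map D LinearMap.id (D h))) := by
          rw [csa, LinearMap.id_comp]
  have inv : TensorProduct.map (TensorProduct.map LinearMap.id (a ∘ₗ a)) LinearMap.id
      (TensorProduct.map D LinearMap.id (D h)) = TensorProduct.map D LinearMap.id (D h) := by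
    rw [tmap_map, sqm, LinearMap.id_comp]
  rw [step]
  conv_rhs => rw [← inv]
  rw [assoc_nat, tmap_map, LinearMap.id_comp, ← TensorProduct.map_comp, caa,
    LinearMap.id_comp]

end HopfAux

set_option maxHeartbeats 2000000 in
/-- For a right `(A,β)`-Hom-module `(M,μ)`, the module `M ⊗ H` with
automorphism `μ ⊗ α`, action `(m⊗h)·a = m·a₍₀₎ ⊗ h a₍₁₎` and coaction
`ρ(m⊗h) = (μ⁻¹(m)⊗h₍₁₎) ⊗ α(h₍₂₎)` is a relative Hom-Hopf module. -/
theorem relHopfModule_structure_on_tensor {M : Type u} [AddCommGroup M] [Module k M]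
    (Hh : HomHopfAlgebra k H) (AA : HomComoduleAlgebra k Hh A)
    (Mm : HomModule k AA.toHomAlgebra M) :
    ∃ T : RelHopfModule k Hh AA (M ⊗[k] H),
      T.aut = TensorProduct.congr Mm.aut Hh.aut ∧
      T.act = Gact Hh AA Mm.act ∧
      T.coact = Gcoact Hh Mm.aut := by
  have act_symm : ∀ (m : M) (a : A),
      Mm.aut.symm (Mm.act m a) = Mm.act (Mm.aut.symm m) (AA.aut.symm a) := by
    intro m a
    apply Mm.aut.injective
    rw [LinearEquiv.apply_symm_apply, Mm.aut_act, LinearEquiv.apply_symm_apply,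
      LinearEquiv.apply_symm_apply]
  have gpure : ∀ (m : M) (h : H), Gcoact Hh Mm.aut (m ⊗ₜ[k] h)
      = (TensorProduct.assoc k M H H).symm
          (Mm.aut.symm m ⊗ₜ[k]
            TensorProduct.map LinearMap.id Hh.aut.toLinearMap (Hh.comul h)) := by
    intro m h; simp [Gcoact]
  refine ⟨⟨TensorProduct.congr Mm.aut Hh.aut, Gact Hh AA Mm.act, ?_, ?_, ?_,
    Gcoact Hh Mm.aut, ?_, ?_, ?_, ?_⟩, rfl, rfl, rfl⟩
  · -- act_act
    intro x a b
    simp only [Gact, LinearMap.compl₂_apply]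
    rw [AA.coact_aut, AA.coact_mul]
    generalize AA.coact a = u
    generalize AA.coact b = v
    induction u using TensorProduct.induction_on with
    | zero => simp
    | add p q hp hq => simp_all [map_add]
    | tmul a0 a1 =>
      induction v using TensorProduct.induction_on with
      | zero => simp
      | add p q hp hq => simp_all [map_add, tmul_add]
      | tmul b0 b1 =>
        induction x using TensorProduct.induction_on with
        | zero => simp
        | add p q hp hq => simp_all [map_add, LinearMap.add_apply]
        | tmul m h =>
          simp only [HopfAux.biTensor_tmul, TensorProduct.map_tmul, TensorProduct.congr_tmul,
            LinearEquiv.coe_coe]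
          rw [Mm.act_act, ← Hh.hom_assoc]
  · -- act_one
    intro x
    simp only [Gact, LinearMap.compl₂_apply, AA.coact_one]
    induction x using TensorProduct.induction_on with
    | zero => simp
    | add p q hp hq => simp_all [map_add, LinearMap.add_apply]
    | tmul m h =>
      simp only [HopfAux.biTensor_tmul, TensorProduct.congr_tmul]
      rw [Mm.act_one, Hh.mul_one]
  · -- aut_act
    intro x a
    simp only [Gact, LinearMap.compl₂_apply]
    rw [AA.coact_aut]
    generalize AA.coact a = u
    induction u using TensorProduct.induction_on with
    | zero => simp
    | add p q hp hq => simp_all [map_add]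
    | tmul a0 a1 =>
      induction x using TensorProduct.induction_on with
      | zero => simp
      | add p q hp hq => simp_all [map_add, LinearMap.add_apply]
      | tmul m h =>
        simp only [HopfAux.biTensor_tmul, TensorProduct.map_tmul, TensorProduct.congr_tmul,
          LinearEquiv.coe_coe]
        rw [Mm.aut_act, Hh.aut_mul]
  · -- coact_aut
    intro x
    induction x using TensorProduct.induction_on with
    | zero => simp
    | add p q hp hq => simp_all [map_add]
    | tmul m h =>
      rw [TensorProduct.congr_tmul, gpure, gpure, Hh.comul_aut,
        LinearEquiv.symm_apply_apply]
      have : (TensorProduct.congr Mm.aut Hh.aut).toLinearMap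
          = TensorProduct.map Mm.aut.toLinearMap Hh.aut.toLinearMap := rfl
      rw [this, ← HopfAux.assoc_symm_nat, TensorProduct.map_tmul, HopfAux.tmap_map, HopfAux.tmap_map,
        LinearMap.id_comp, LinearMap.comp_id]
      simp
  · -- counit_coact
    intro x
    induction x using TensorProduct.induction_on with
    | zero => simp
    | add p q hp hq => simp_all [map_add]
    | tmul m h =>
      rw [gpure, TensorProduct.congr_symm_tmul, ← Hh.counit_comul_right h]
      generalize Hh.comul h = w
      induction w using TensorProduct.induction_on with
      | zero => simp
      | add p q hp hq => simp_all [map_add, tmul_add]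
      | tmul y z =>
        simp only [TensorProduct.map_tmul, TensorProduct.assoc_symm_tmul,
          LinearMap.id_apply, LinearEquiv.coe_coe, TensorProduct.rid_tmul,
          Hh.counit_aut, TensorProduct.tmul_smul, TensorProduct.smul_tmul]
  · -- hom_coassoc
    intro x
    induction x using TensorProduct.induction_on with
    | zero => simp
    | add p q hp hq => simp_all [map_add]
    | tmul m h =>
      set Lam : H ⊗[k] (H ⊗[k] H) →ₗ[k] (M ⊗[k] H) ⊗[k] (H ⊗[k] H) :=
        TensorProduct.map ((TensorProduct.mk k M H) (Mm.aut.symm (Mm.aut.symm m)))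
          LinearMap.id with hLam
      have lemA : ∀ w : H ⊗[k] H,
          TensorProduct.assoc k (M ⊗[k] H) H H
            (TensorProduct.map (Gcoact Hh Mm.aut) Hh.aut.symm.toLinearMap
              ((TensorProduct.assoc k M H H).symm
                (Mm.aut.symm m ⊗ₜ[k] TensorProduct.map LinearMap.id Hh.aut.toLinearMap w)))
          = Lam (TensorProduct.map LinearMap.id
              (TensorProduct.map Hh.aut.toLinearMap LinearMap.id)
              (TensorProduct.assoc k H H H
                (TensorProduct.map Hh.comul LinearMap.id w))) := by
        intro w
        induction w using TensorProduct.induction_on with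
        | zero => simp
        | add p q hp hq => simp_all [map_add, tmul_add]
        | tmul y z =>
          simp only [TensorProduct.map_tmul, TensorProduct.assoc_symm_tmul,
            LinearMap.id_apply, LinearEquiv.coe_coe]
          rw [gpure]
          generalize Hh.comul y = v
          induction v using TensorProduct.induction_on with
          | zero => simp
          | add p q hp hq => simp_all [map_add, tmul_add, add_tmul]
          | tmul p q =>
            simp [hLam, TensorProduct.mk_apply]
      have lemB : ∀ w : H ⊗[k] H,
          TensorProduct.map (TensorProduct.congr Mm.aut Hh.aut).symm.toLinearMap Hh.comul
            ((TensorProduct.assoc k M H H).symm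
              (Mm.aut.symm m ⊗ₜ[k] TensorProduct.map LinearMap.id Hh.aut.toLinearMap w))
          = Lam (TensorProduct.map Hh.aut.symm.toLinearMap
              (TensorProduct.map Hh.aut.toLinearMap Hh.aut.toLinearMap)
              (TensorProduct.map LinearMap.id Hh.comul w)) := by
        intro w
        induction w using TensorProduct.induction_on with
        | zero => simp
        | add p q hp hq => simp_all [map_add, tmul_add]
        | tmul y z =>
          simp only [TensorProduct.map_tmul, TensorProduct.assoc_symm_tmul,
            LinearMap.id_apply, LinearEquiv.coe_coe]
          have : (TensorProduct.congr Mm.aut Hh.aut).symm (Mm.aut.symm m ⊗ₜ[k] y)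
              = Mm.aut.symm (Mm.aut.symm m) ⊗ₜ[k] Hh.aut.symm y :=
            TensorProduct.congr_symm_tmul _ _ _ _
          rw [this, Hh.comul_aut, hLam]
          simp [TensorProduct.mk_apply]
      rw [gpure, lemA, lemB]
      exact congrArg Lam (HopfAux.key_coassoc Hh h)
  · -- compat
    intro x a
    induction x using TensorProduct.induction_on with
    | zero => simp
    | add p q hp hq => simp_all [map_add, LinearMap.add_apply]
    | tmul m h =>
      simp only [Gact, LinearMap.compl₂_apply]
      set Th : A ⊗[k] (H ⊗[k] H) →ₗ[k] (M ⊗[k] H) ⊗[k] H :=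
        (biTensor (biTensor Mm.act Hh.mul) Hh.mul (Gcoact Hh Mm.aut (m ⊗ₜ[k] h))) ∘ₗ
          ((TensorProduct.assoc k A H H).symm.toLinearMap ∘ₗ
            TensorProduct.map LinearMap.id
              (TensorProduct.map LinearMap.id Hh.aut.toLinearMap)) with hTh
      have lem1 : ∀ u : A ⊗[k] H,
          Gcoact Hh Mm.aut (biTensor Mm.act Hh.mul (m ⊗ₜ[k] h) u)
            = Th (TensorProduct.map AA.aut.symm.toLinearMap Hh.comul u) := by
        intro u
        induction u using TensorProduct.induction_on with
        | zero => simp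
        | add p q hp hq => simp_all [map_add]
        | tmul a0 a1 =>
          rw [HopfAux.biTensor_tmul, gpure, act_symm, Hh.comul_mul, hTh]
          simp only [LinearMap.comp_apply, TensorProduct.map_tmul, LinearMap.id_apply,
            LinearEquiv.coe_coe]
          rw [gpure]
          generalize Hh.comul h = w
          generalize Hh.comul a1 = v
          induction w using TensorProduct.induction_on with
          | zero => simp
          | add p q hp hq => simp_all [map_add, tmul_add, add_tmul, LinearMap.add_apply]
          | tmul h1 h2 =>
            induction v using TensorProduct.induction_on with
            | zero => simp
            | add p q hp hq => simp_all [map_add, tmul_add, add_tmul, LinearMap.add_apply]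
            | tmul c d =>
              simp only [HopfAux.biTensor_tmul, TensorProduct.map_tmul, LinearMap.id_apply,
                LinearEquiv.coe_coe, TensorProduct.assoc_symm_tmul]
              rw [Hh.aut_mul]
      have lem2 : ∀ u : A ⊗[k] H,
          biTensor (Gact Hh AA Mm.act) Hh.mul (Gcoact Hh Mm.aut (m ⊗ₜ[k] h)) u
            = Th (TensorProduct.assoc k A H H
                (TensorProduct.map AA.coact Hh.aut.symm.toLinearMap u)) := by
        intro u
        induction u using TensorProduct.induction_on with
        | zero => simp
        | add p q hp hq => simp_all [map_add]
        | tmul a0 a1 =>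
          rw [hTh]
          simp only [LinearMap.comp_apply, TensorProduct.map_tmul, LinearMap.id_apply,
            LinearEquiv.coe_coe]
          rw [gpure]
          generalize Hh.comul h = w
          induction w using TensorProduct.induction_on with
          | zero => simp
          | add p q hp hq => simp_all [map_add, tmul_add, add_tmul, LinearMap.add_apply]
          | tmul h1 h2 =>
            simp only [TensorProduct.map_tmul, LinearMap.id_apply, LinearEquiv.coe_coe,
              TensorProduct.assoc_symm_tmul, HopfAux.biTensor_tmul]
            simp only [Gact, LinearMap.compl₂_apply]
            generalize AA.coact a0 = v
            induction v using TensorProduct.induction_on with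
            | zero => simp
            | add p q hp hq => simp_all [map_add, tmul_add, add_tmul, LinearMap.add_apply]
            | tmul p q =>
              simp only [HopfAux.biTensor_tmul, TensorProduct.map_tmul, LinearMap.id_apply,
                LinearEquiv.coe_coe, TensorProduct.assoc_tmul,
                TensorProduct.assoc_symm_tmul, LinearEquiv.apply_symm_apply]
      rw [lem1 (AA.coact a), ← AA.hom_coassoc a]
      exact (lem2 (AA.coact a)).symm


end Statements
end

section
/- Let (H,α) be a monoidal Hom-Hopf algebra, (A,β) a right (H,α)-Hom-comodule algebra with a total integral φ:H→A, and (M,μ) a relative Hom-Hopf module. Define λ_M : M⊗H → M by λ_M(m⊗h) = μ⁻¹(m_(0)) · φ(S(m_(1))α(h)). Then λ_M is a morphism of right (H,α)-Hom-comodules from M⊗H to M, where M⊗H carries the automorphism μ⊗α and the coaction ρ_{M⊗H}(m⊗h) = (μ⁻¹(m)⊗h_(1)) ⊗ α(h_(2)); that is, ρ_M(λ_M(m⊗h)) = λ_M(μ⁻¹(m)⊗h_(1)) ⊗ α(h_(2)) for all m∈M, h∈H. -/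
/- Preliminaries: monoidal Hom-structures (Caenepeel–Goyvaerts style), following the paper. -/

open TensorProduct

section AuxHelpers

open TensorProduct

variable {k : Type v} [CommRing k]

-- generic tensor helpers
private lemma mmap {M N P Q U V : Type*}
    [AddCommGroup M] [Module k M] [AddCommGroup N] [Module k N]
    [AddCommGroup P] [Module k P] [AddCommGroup Q] [Module k Q]
    [AddCommGroup U] [Module k U] [AddCommGroup V] [Module k V]
    (f : P →ₗ[k] U) (g : Q →ₗ[k] V) (f' : M →ₗ[k] P) (g' : N →ₗ[k] Q)
    (t : M ⊗[k] N) :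
    TensorProduct.map f g (TensorProduct.map f' g' t)
      = TensorProduct.map (f ∘ₗ f') (g ∘ₗ g') t := by
  rw [TensorProduct.map_comp]; rfl


private lemma mmap_unfuse_r {M N P Q U : Type*}
    [AddCommGroup M] [Module k M] [AddCommGroup N] [Module k N]
    [AddCommGroup P] [Module k P] [AddCommGroup Q] [Module k Q]
    [AddCommGroup U] [Module k U]
    (f : M →ₗ[k] P) (g : Q →ₗ[k] U) (g' : N →ₗ[k] Q) (t : M ⊗[k] N) :
    TensorProduct.map f (g ∘ₗ g') t
      = TensorProduct.map f g (TensorProduct.map LinearMap.id g' t) := by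
  rw [mmap]; simp

private lemma mmap_unfuse_l {M N P Q U : Type*}
    [AddCommGroup M] [Module k M] [AddCommGroup N] [Module k N]
    [AddCommGroup P] [Module k P] [AddCommGroup Q] [Module k Q]
    [AddCommGroup U] [Module k U]
    (f : P →ₗ[k] U) (f' : M →ₗ[k] P) (g : N →ₗ[k] Q) (t : M ⊗[k] N) :
    TensorProduct.map (f ∘ₗ f') g t
      = TensorProduct.map f g (TensorProduct.map f' LinearMap.id t) := by
  rw [mmap]; simp

private lemma push_symm {M N P Q : Type*}
    [AddCommGroup M] [Module k M] [AddCommGroup N] [Module k N]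
    [AddCommGroup P] [Module k P] [AddCommGroup Q] [Module k Q]
    (h₂ : P →ₗ[k] Q) (x : M ⊗[k] (N ⊗[k] P)) :
    TensorProduct.map LinearMap.id h₂ ((TensorProduct.assoc k M N P).symm x)
      = (TensorProduct.assoc k M N Q).symm
          (TensorProduct.map LinearMap.id (TensorProduct.map LinearMap.id h₂) x) := by
  induction x using TensorProduct.induction_on with
  | zero => simp
  | add a b ha hb => simp only [map_add, ha, hb]
  | tmul m u =>
    induction u using TensorProduct.induction_on with
    | zero => simp
    | add a b ha hb => simp only [TensorProduct.tmul_add, map_add, ha, hb]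
    | tmul n p => simp

private lemma biTensor_tmul {M N P Q R S : Type u}
    [AddCommGroup M] [Module k M] [AddCommGroup N] [Module k N]
    [AddCommGroup P] [Module k P] [AddCommGroup Q] [Module k Q]
    [AddCommGroup R] [Module k R] [AddCommGroup S] [Module k S]
    (f : M →ₗ[k] P →ₗ[k] R) (g : N →ₗ[k] Q →ₗ[k] S)
    (a : M) (b : N) (c : P) (d : Q) :
    biTensor f g (a ⊗ₜ[k] b) (c ⊗ₜ[k] d) = f a c ⊗ₜ[k] g b d := by
  simp [biTensor, TensorProduct.homTensorHomMap_apply]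


private lemma mmap_unfuse_r2 {M N P Q U : Type*}
    [AddCommGroup M] [Module k M] [AddCommGroup N] [Module k N]
    [AddCommGroup P] [Module k P] [AddCommGroup Q] [Module k Q]
    [AddCommGroup U] [Module k U]
    (f : M →ₗ[k] P) (g : Q →ₗ[k] U) (g' : N →ₗ[k] Q) (t : M ⊗[k] N) :
    TensorProduct.map f (g ∘ₗ g') t
      = TensorProduct.map LinearMap.id g (TensorProduct.map f g' t) := by
  rw [mmap]; simp


private lemma biTensor_tmul_left {M N P Q R S : Type u}
    [AddCommGroup M] [Module k M] [AddCommGroup N] [Module k N]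
    [AddCommGroup P] [Module k P] [AddCommGroup Q] [Module k Q]
    [AddCommGroup R] [Module k R] [AddCommGroup S] [Module k S]
    (f : M →ₗ[k] P →ₗ[k] R) (g : N →ₗ[k] Q →ₗ[k] S) (a : M) (b : N) :
    biTensor f g (a ⊗ₜ[k] b) = TensorProduct.map (f a) (g b) := by
  simp [biTensor, TensorProduct.homTensorHomMap_apply]

end AuxHelpers

section AuxHopf

open TensorProduct

variable {k : Type v} [CommRing k] {H A : Type u}
  [AddCommGroup H] [Module k H] [AddCommGroup A] [Module k A]

namespace HomHopfAlgebra

variable (Hh : HomHopfAlgebra k H)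

lemma counit_aut_symm (h : H) : Hh.counit (Hh.aut.symm h) = Hh.counit h := by
  conv_rhs => rw [← Hh.aut.apply_symm_apply h, Hh.counit_aut]

lemma comul_aut_symm (h : H) :
    Hh.comul (Hh.aut.symm h)
      = TensorProduct.map Hh.aut.symm.toLinearMap Hh.aut.symm.toLinearMap (Hh.comul h) := by
  have h1 := Hh.comul_aut (Hh.aut.symm h)
  rw [Hh.aut.apply_symm_apply] at h1
  rw [h1, mmap]
  have e1 : Hh.aut.symm.toLinearMap ∘ₗ Hh.aut.toLinearMap = LinearMap.id := by
    ext x; simp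
  rw [e1, TensorProduct.map_id]
  rfl

/-- The axioms force `α ∘ α = id` on `H`. -/
lemma aut_symm_sq (h : H) : Hh.aut.symm (Hh.aut.symm h) = h := by
  have hc := Hh.hom_coassoc h
  have E1 : ∀ t : H ⊗[k] H,
      (TensorProduct.lid k (H ⊗[k] H))
        (TensorProduct.map Hh.counit LinearMap.id
          (TensorProduct.map Hh.aut.symm.toLinearMap Hh.comul t))
      = Hh.comul ((TensorProduct.lid k H)
          (TensorProduct.map Hh.counit LinearMap.id t)) := by
    intro t
    induction t using TensorProduct.induction_on with
    | zero => simp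
    | tmul x y => simp [Hh.counit_aut_symm]
    | add a b ha hb => simp only [map_add, ha, hb]
  have inner : ∀ (s : H ⊗[k] H) (z : H),
      (TensorProduct.lid k (H ⊗[k] H))
        (TensorProduct.map Hh.counit LinearMap.id
          ((TensorProduct.assoc k H H H) (s ⊗ₜ[k] z)))
      = ((TensorProduct.lid k H) (TensorProduct.map Hh.counit LinearMap.id s)) ⊗ₜ[k] z := by
    intro s z
    induction s using TensorProduct.induction_on with
    | zero => simp
    | tmul u v => simp [TensorProduct.smul_tmul]
    | add a b ha hb => simp only [map_add, add_tmul, ha, hb]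
  have E2 : ∀ t : H ⊗[k] H,
      (TensorProduct.lid k (H ⊗[k] H))
        (TensorProduct.map Hh.counit LinearMap.id
          ((TensorProduct.assoc k H H H)
            (TensorProduct.map Hh.comul Hh.aut.toLinearMap t)))
      = TensorProduct.map
          ((TensorProduct.lid k H).toLinearMap ∘ₗ
            TensorProduct.map Hh.counit LinearMap.id ∘ₗ Hh.comul)
          Hh.aut.toLinearMap t := by
    intro t
    induction t using TensorProduct.induction_on with
    | zero => simp
    | tmul x y =>
      simp only [TensorProduct.map_tmul, LinearMap.comp_apply, LinearEquiv.coe_coe,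
        LinearEquiv.coe_toLinearMap, inner]
    | add a b ha hb => simp only [map_add, ha, hb]
  have key1 : Hh.comul (Hh.aut.symm h)
      = TensorProduct.map
          ((TensorProduct.lid k H).toLinearMap ∘ₗ
            TensorProduct.map Hh.counit LinearMap.id ∘ₗ Hh.comul)
          Hh.aut.toLinearMap (Hh.comul h) := by
    rw [← E2 (Hh.comul h), ← hc, E1 (Hh.comul h), Hh.counit_comul_left]
  have lmap : ((TensorProduct.lid k H).toLinearMap ∘ₗ
        TensorProduct.map Hh.counit LinearMap.id ∘ₗ Hh.comul)
      = Hh.aut.symm.toLinearMap := by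
    ext x
    simpa using Hh.counit_comul_left x
  rw [lmap, Hh.comul_aut_symm] at key1
  have E3 : ∀ (f : H →ₗ[k] H) (t : H ⊗[k] H),
      (TensorProduct.lid k H)
        (TensorProduct.map Hh.counit LinearMap.id
          (TensorProduct.map Hh.aut.symm.toLinearMap f t))
      = f ((TensorProduct.lid k H) (TensorProduct.map Hh.counit LinearMap.id t)) := by
    intro f t
    induction t using TensorProduct.induction_on with
    | zero => simp
    | tmul x y => simp [Hh.counit_aut_symm]
    | add a b ha hb => simp only [map_add, ha, hb]
  have key2 := congrArg (fun t => (TensorProduct.lid k H)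
      (TensorProduct.map Hh.counit LinearMap.id t)) key1
  simp only [E3, Hh.counit_comul_left, LinearEquiv.coe_coe] at key2
  rw [Hh.aut.apply_symm_apply] at key2
  exact key2

lemma aut_aut (h : H) : Hh.aut (Hh.aut h) = h := by
  have := Hh.aut_symm_sq (Hh.aut (Hh.aut h))
  simp only [LinearEquiv.symm_apply_apply] at this
  rw [← this]

lemma aut_symm_eq (h : H) : Hh.aut.symm h = Hh.aut h := by
  rw [← Hh.aut_aut h, LinearEquiv.symm_apply_apply, Hh.aut_aut]

lemma aut_symm_toLinearMap : Hh.aut.symm.toLinearMap = Hh.aut.toLinearMap := by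
  ext x; exact Hh.aut_symm_eq x


-- ### Convolution machinery for the antipode's anti-comultiplicativity

/-- `σ` is notation-free shorthand for the automorphism as a linear map. -/

lemma sigma_sigma : Hh.aut.toLinearMap ∘ₗ Hh.aut.toLinearMap = LinearMap.id := by
  ext x; simp [Hh.aut_aut x]

lemma comul_sigma : Hh.comul ∘ₗ Hh.aut.toLinearMap
    = TensorProduct.map Hh.aut.toLinearMap Hh.aut.toLinearMap ∘ₗ Hh.comul := by
  ext x; simpa using Hh.comul_aut x

lemma antipode_sigma : Hh.antipode ∘ₗ Hh.aut.toLinearMap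
    = Hh.aut.toLinearMap ∘ₗ Hh.antipode := by
  ext x; simpa using Hh.antipode_aut x

/-- H1: hom-coassociativity with `α` only. -/
lemma H1 (h : H) :
    TensorProduct.map Hh.aut.toLinearMap Hh.comul (Hh.comul h)
      = TensorProduct.assoc k H H H
          (TensorProduct.map Hh.comul Hh.aut.toLinearMap (Hh.comul h)) := by
  have := Hh.hom_coassoc h
  rwa [Hh.aut_symm_toLinearMap] at this

/-- R1: `Σ c₁ ⊗ Δ(c₂) = Σ α(c₁₁) ⊗ (c₁₂ ⊗ α(c₂))`. -/
lemma R1 (h : H) :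
    TensorProduct.map LinearMap.id Hh.comul (Hh.comul h)
      = TensorProduct.map Hh.aut.toLinearMap LinearMap.id
          ((TensorProduct.assoc k H H H)
            (TensorProduct.map Hh.comul Hh.aut.toLinearMap (Hh.comul h))) := by
  rw [← Hh.H1, mmap, Hh.sigma_sigma, LinearMap.id_comp]

/-- R2: `Σ Δ(c₁) ⊗ c₂ = Σ (α(c₁) ⊗ c₂₁) ⊗ α(c₂₂)`. -/
lemma R2 (h : H) :
    TensorProduct.map Hh.comul LinearMap.id (Hh.comul h)
      = TensorProduct.map LinearMap.id Hh.aut.toLinearMap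
          ((TensorProduct.assoc k H H H).symm
            (TensorProduct.map Hh.aut.toLinearMap Hh.comul (Hh.comul h))) := by
  rw [Hh.H1, LinearEquiv.symm_apply_apply, mmap, Hh.sigma_sigma, LinearMap.id_comp]

lemma lift_mul_sigma (t : H ⊗[k] H) :
    TensorProduct.lift Hh.mul
        (TensorProduct.map Hh.aut.toLinearMap Hh.aut.toLinearMap t)
      = Hh.aut (TensorProduct.lift Hh.mul t) := by
  induction t using TensorProduct.induction_on with
  | zero => simp
  | tmul x y => simp [Hh.aut_mul]
  | add a b ha hb => simp only [map_add, ha, hb]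

/-- `κ₁ : Σ α(x₁) · α(S(x₂)) = ε(x) 1`. -/
lemma kappa1 (x : H) :
    TensorProduct.lift Hh.mul
        (TensorProduct.map Hh.aut.toLinearMap
          (Hh.aut.toLinearMap ∘ₗ Hh.antipode) (Hh.comul x))
      = Hh.counit x • Hh.one := by
  have e1 : TensorProduct.map Hh.aut.toLinearMap
        (Hh.aut.toLinearMap ∘ₗ Hh.antipode) (Hh.comul x)
      = TensorProduct.map Hh.aut.toLinearMap Hh.aut.toLinearMap
          (TensorProduct.map LinearMap.id Hh.antipode (Hh.comul x)) := by
    rw [mmap]; simp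
  rw [e1, Hh.lift_mul_sigma, Hh.convolution_antipode, map_smul, Hh.aut_one]

lemma kappa1_map :
    TensorProduct.lift Hh.mul ∘ₗ
        TensorProduct.map Hh.aut.toLinearMap (Hh.aut.toLinearMap ∘ₗ Hh.antipode) ∘ₗ Hh.comul
      = Hh.counit.smulRight Hh.one := by
  ext x; simpa using Hh.kappa1 x

lemma comul_lift_mul (t : H ⊗[k] H) :
    Hh.comul (TensorProduct.lift Hh.mul t)
      = TensorProduct.lift (biTensor Hh.mul Hh.mul)
          (TensorProduct.map Hh.comul Hh.comul t) := by
  induction t using TensorProduct.induction_on with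
  | zero => simp
  | tmul x y => simpa using Hh.comul_mul x y
  | add a b ha hb => simp only [map_add, ha, hb]


/-- conv F e = ε ⋅ (1⊗1) where F = Δ∘S, e = Δ. -/
lemma convFe (c : H) :
    TensorProduct.lift (biTensor Hh.mul Hh.mul)
        (TensorProduct.map (Hh.comul ∘ₗ Hh.antipode) Hh.comul (Hh.comul c))
      = Hh.counit c • (Hh.one ⊗ₜ[k] Hh.one) := by
  have e1 : TensorProduct.map (Hh.comul ∘ₗ Hh.antipode) Hh.comul (Hh.comul c)
      = TensorProduct.map Hh.comul Hh.comul
          (TensorProduct.map Hh.antipode LinearMap.id (Hh.comul c)) := by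
    rw [mmap]; simp
  rw [e1, ← Hh.comul_lift_mul, Hh.antipode_convolution, map_smul, Hh.comul_one]


/-- Xid: `(Δ ⊗ Δ)(Δ c)` in fully right-towered form. -/
lemma Xid (c : H) :
    TensorProduct.map Hh.comul Hh.comul (Hh.comul c)
      = (TensorProduct.assoc k H H (H ⊗[k] H)).symm
          (TensorProduct.map Hh.aut.toLinearMap
            ((TensorProduct.map Hh.aut.toLinearMap
                (TensorProduct.map Hh.aut.toLinearMap Hh.aut.toLinearMap)
              ∘ₗ (TensorProduct.assoc k H H H).toLinearMap
              ∘ₗ TensorProduct.map Hh.comul Hh.aut.toLinearMap ∘ₗ Hh.comul))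
            (Hh.comul c)) := by
  have T2core : (TensorProduct.map LinearMap.id (Hh.comul ∘ₗ Hh.aut.toLinearMap)
        ∘ₗ Hh.comul : H →ₗ[k] H ⊗[k] (H ⊗[k] H))
      = TensorProduct.map Hh.aut.toLinearMap
            (TensorProduct.map Hh.aut.toLinearMap Hh.aut.toLinearMap)
          ∘ₗ (TensorProduct.assoc k H H H).toLinearMap
          ∘ₗ TensorProduct.map Hh.comul Hh.aut.toLinearMap ∘ₗ Hh.comul := by
    apply LinearMap.ext; intro d
    simp only [LinearMap.comp_apply, LinearEquiv.coe_coe]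
    rw [Hh.comul_sigma, mmap_unfuse_r, Hh.R1, mmap]
    simp only [LinearMap.id_comp, LinearMap.comp_id]
  have step1 : TensorProduct.map Hh.comul Hh.comul (Hh.comul c)
      = TensorProduct.map LinearMap.id (Hh.comul ∘ₗ Hh.aut.toLinearMap)
          ((TensorProduct.assoc k H H H).symm
            (TensorProduct.map Hh.aut.toLinearMap Hh.comul (Hh.comul c))) := by
    have h1 : TensorProduct.map Hh.comul Hh.comul (Hh.comul c)
        = TensorProduct.map LinearMap.id Hh.comul
            (TensorProduct.map Hh.comul LinearMap.id (Hh.comul c)) := by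
      rw [mmap]; simp
    rw [h1, Hh.R2, mmap]
    simp only [LinearMap.id_comp, LinearMap.comp_id]
  rw [step1, push_symm]
  congr 1
  rw [mmap]
  simp only [LinearMap.id_comp, LinearMap.comp_id]
  rw [T2core]

/-- Generic 4-leg shuffle for the convEG computation. -/
lemma SH1 (t : H ⊗[k] (H ⊗[k] (H ⊗[k] H))) :
    TensorProduct.tensorTensorTensorComm k H H H H
        (TensorProduct.map LinearMap.id
          (TensorProduct.map Hh.antipode Hh.antipode ∘ₗ (TensorProduct.comm k H H).toLinearMap)
          ((TensorProduct.assoc k H H (H ⊗[k] H)).symm t))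
      = (TensorProduct.assoc k H H (H ⊗[k] H)).symm
          (TensorProduct.map LinearMap.id
            (TensorProduct.map Hh.antipode (TensorProduct.map LinearMap.id Hh.antipode)
              ∘ₗ (TensorProduct.comm k (H ⊗[k] H) H).toLinearMap
              ∘ₗ (TensorProduct.assoc k H H H).symm.toLinearMap) t) := by
  induction t using TensorProduct.induction_on with
  | zero => simp
  | add a b ha hb => simp only [map_add, ha, hb]
  | tmul x u =>
    induction u using TensorProduct.induction_on with
    | zero => simp
    | add a b ha hb => simp only [TensorProduct.tmul_add, map_add, ha, hb]
    | tmul y v =>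
      induction v using TensorProduct.induction_on with
      | zero => simp
      | add a b ha hb => simp only [TensorProduct.tmul_add, map_add, ha, hb]
      | tmul z w =>
        simp only [TensorProduct.assoc_symm_tmul, TensorProduct.map_tmul,
          LinearMap.comp_apply, LinearEquiv.coe_coe, TensorProduct.comm_tmul,
          TensorProduct.tensorTensorTensorComm_tmul, LinearMap.id_coe, id_eq]

lemma mulB_split (t : (H ⊗[k] H) ⊗[k] (H ⊗[k] H)) :
    TensorProduct.lift (biTensor Hh.mul Hh.mul) t
      = TensorProduct.map (TensorProduct.lift Hh.mul) (TensorProduct.lift Hh.mul)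
          (TensorProduct.tensorTensorTensorComm k H H H H t) := by
  induction t using TensorProduct.induction_on with
  | zero => simp
  | add a b ha hb => simp only [map_add, ha, hb]
  | tmul u v =>
    induction u using TensorProduct.induction_on with
    | zero => simp
    | add a b ha hb => simp only [TensorProduct.add_tmul, map_add, ha, hb]
    | tmul x y =>
      induction v using TensorProduct.induction_on with
      | zero => simp
      | add a b ha hb => simp only [TensorProduct.tmul_add, map_add, ha, hb]
      | tmul z w => simp [biTensor_tmul, TensorProduct.tensorTensorTensorComm_tmul]

lemma PPeq (t : H ⊗[k] H) :
    TensorProduct.map Hh.antipode (TensorProduct.map LinearMap.id Hh.antipode)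
        ((TensorProduct.comm k (H ⊗[k] H) H) ((TensorProduct.assoc k H H H).symm
          ((TensorProduct.map Hh.aut.toLinearMap
              (TensorProduct.map Hh.aut.toLinearMap Hh.aut.toLinearMap))
            ((TensorProduct.assoc k H H H)
              ((TensorProduct.map Hh.comul Hh.aut.toLinearMap) t)))))
      = TensorProduct.map Hh.antipode
          ((TensorProduct.map Hh.aut.toLinearMap (Hh.aut.toLinearMap ∘ₗ Hh.antipode))
            ∘ₗ Hh.comul)
          ((TensorProduct.comm k H H) t) := by
  induction t using TensorProduct.induction_on with
  | zero => simp
  | add a b ha hb => simp only [map_add, ha, hb]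
  | tmul x y =>
    simp only [TensorProduct.map_tmul, TensorProduct.comm_tmul, LinearMap.comp_apply,
      LinearEquiv.coe_coe, LinearMap.id_coe, id_eq]
    generalize Hh.comul x = s
    induction s using TensorProduct.induction_on with
    | zero => simp
    | add a b ha hb =>
      simp only [TensorProduct.add_tmul, TensorProduct.tmul_add, map_add, ha, hb]
    | tmul u v =>
      simp [Hh.aut_aut, Hh.antipode_aut]

lemma PUSH1 (F G : H ⊗[k] H →ₗ[k] H) (t : H ⊗[k] (H ⊗[k] (H ⊗[k] H))) :
    TensorProduct.map F G ((TensorProduct.assoc k H H (H ⊗[k] H)).symm t)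
      = TensorProduct.map F LinearMap.id
          ((TensorProduct.assoc k H H H).symm
            (TensorProduct.map LinearMap.id (TensorProduct.map LinearMap.id G) t)) := by
  induction t using TensorProduct.induction_on with
  | zero => simp
  | add a b ha hb => simp only [map_add, ha, hb]
  | tmul x u =>
    induction u using TensorProduct.induction_on with
    | zero => simp
    | add a b ha hb => simp only [TensorProduct.tmul_add, map_add, ha, hb]
    | tmul y w => simp

lemma CCgen (u : H ⊗[k] H) :
    TensorProduct.map Hh.antipode (Hh.counit.smulRight Hh.one)
        ((TensorProduct.comm k H H) u)
      = (Hh.antipode ((TensorProduct.lid k H)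
          (TensorProduct.map Hh.counit LinearMap.id u))) ⊗ₜ[k] Hh.one := by
  induction u using TensorProduct.induction_on with
  | zero => simp
  | add a b ha hb => simp only [map_add, ha, hb, TensorProduct.add_tmul]
  | tmul x y =>
    simp only [TensorProduct.comm_tmul, TensorProduct.map_tmul,
      LinearMap.smulRight_apply, TensorProduct.lid_tmul, map_smul,
      TensorProduct.smul_tmul, TensorProduct.tmul_smul, LinearMap.id_coe, id_eq]

lemma FIN (u : H ⊗[k] H) :
    TensorProduct.map (TensorProduct.lift Hh.mul) LinearMap.id
        ((TensorProduct.assoc k H H H).symm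
          (TensorProduct.map LinearMap.id ((TensorProduct.mk k H H).flip Hh.one) u))
      = (TensorProduct.lift Hh.mul u) ⊗ₜ[k] Hh.one := by
  induction u using TensorProduct.induction_on with
  | zero => simp
  | add a b ha hb => simp only [map_add, ha, hb, TensorProduct.add_tmul]
  | tmul x y => simp

/-- conv e G = ε ⋅ (1⊗1). -/
lemma convEG (c : H) :
    TensorProduct.lift (biTensor Hh.mul Hh.mul)
        (TensorProduct.map Hh.comul
          (TensorProduct.map Hh.antipode Hh.antipode
            ∘ₗ (TensorProduct.comm k H H).toLinearMap ∘ₗ Hh.comul)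
          (Hh.comul c))
      = Hh.counit c • (Hh.one ⊗ₜ[k] Hh.one) := by
  have step1 : TensorProduct.map Hh.comul
        (TensorProduct.map Hh.antipode Hh.antipode
          ∘ₗ (TensorProduct.comm k H H).toLinearMap ∘ₗ Hh.comul)
        (Hh.comul c)
      = TensorProduct.map LinearMap.id
          (TensorProduct.map Hh.antipode Hh.antipode
            ∘ₗ (TensorProduct.comm k H H).toLinearMap)
          (TensorProduct.map Hh.comul Hh.comul (Hh.comul c)) := by
    rw [mmap, LinearMap.id_comp, LinearMap.comp_assoc]
  rw [step1, Hh.mulB_split, Hh.Xid, Hh.SH1]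
  rw [mmap, LinearMap.id_comp]
  -- fuse the second-leg composite into P'' form
  have fuse1 : ((TensorProduct.map Hh.antipode (TensorProduct.map LinearMap.id Hh.antipode)
        ∘ₗ (TensorProduct.comm k (H ⊗[k] H) H).toLinearMap
        ∘ₗ (TensorProduct.assoc k H H H).symm.toLinearMap)
      ∘ₗ (TensorProduct.map Hh.aut.toLinearMap
            (TensorProduct.map Hh.aut.toLinearMap Hh.aut.toLinearMap)
          ∘ₗ (TensorProduct.assoc k H H H).toLinearMap
          ∘ₗ TensorProduct.map Hh.comul Hh.aut.toLinearMap ∘ₗ Hh.comul))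
      = TensorProduct.map Hh.antipode
          ((TensorProduct.map Hh.aut.toLinearMap (Hh.aut.toLinearMap ∘ₗ Hh.antipode))
            ∘ₗ Hh.comul)
          ∘ₗ (TensorProduct.comm k H H).toLinearMap ∘ₗ Hh.comul := by
    apply LinearMap.ext; intro d
    simpa using Hh.PPeq (Hh.comul d)
  rw [fuse1]
  rw [PUSH1]
  rw [mmap, LinearMap.id_comp]
  have fuse2 : (TensorProduct.map LinearMap.id (TensorProduct.lift Hh.mul))
        ∘ₗ (TensorProduct.map Hh.antipode
            ((TensorProduct.map Hh.aut.toLinearMap (Hh.aut.toLinearMap ∘ₗ Hh.antipode))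
              ∘ₗ Hh.comul)
          ∘ₗ (TensorProduct.comm k H H).toLinearMap ∘ₗ Hh.comul)
      = TensorProduct.map Hh.antipode (Hh.counit.smulRight Hh.one)
          ∘ₗ (TensorProduct.comm k H H).toLinearMap ∘ₗ Hh.comul := by
    apply LinearMap.ext; intro d
    simp only [LinearMap.comp_apply, LinearEquiv.coe_coe]
    rw [mmap, LinearMap.id_comp, kappa1_map]
  rw [fuse2]
  have fuse3 : (TensorProduct.map Hh.antipode (Hh.counit.smulRight Hh.one)
        ∘ₗ (TensorProduct.comm k H H).toLinearMap ∘ₗ Hh.comul)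
      = ((TensorProduct.mk k H H).flip Hh.one) ∘ₗ Hh.antipode ∘ₗ Hh.aut.toLinearMap := by
    apply LinearMap.ext; intro d
    simp only [LinearMap.comp_apply, LinearEquiv.coe_coe]
    rw [Hh.CCgen, Hh.counit_comul_left, Hh.aut_symm_eq]
    simp
  rw [fuse3]
  have fuse4 : TensorProduct.map Hh.aut.toLinearMap
        (((TensorProduct.mk k H H).flip Hh.one) ∘ₗ Hh.antipode ∘ₗ Hh.aut.toLinearMap)
        (Hh.comul c)
      = TensorProduct.map LinearMap.id ((TensorProduct.mk k H H).flip Hh.one)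
          (TensorProduct.map Hh.aut.toLinearMap
            (Hh.aut.toLinearMap ∘ₗ Hh.antipode) (Hh.comul c)) := by
    rw [mmap, LinearMap.id_comp, Hh.antipode_sigma]
  rw [fuse4, Hh.FIN, Hh.kappa1, TensorProduct.smul_tmul']


lemma mulB_one_r (u : H ⊗[k] H) :
    biTensor Hh.mul Hh.mul u (Hh.one ⊗ₜ[k] Hh.one)
      = TensorProduct.map Hh.aut.toLinearMap Hh.aut.toLinearMap u := by
  induction u using TensorProduct.induction_on with
  | zero => simp
  | add a b ha hb => simp only [map_add, LinearMap.add_apply, ha, hb]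
  | tmul x y => simp [biTensor_tmul, Hh.mul_one]

lemma mulB_one_l (u : H ⊗[k] H) :
    biTensor Hh.mul Hh.mul (Hh.one ⊗ₜ[k] Hh.one) u
      = TensorProduct.map Hh.aut.toLinearMap Hh.aut.toLinearMap u := by
  induction u using TensorProduct.induction_on with
  | zero => simp
  | add a b ha hb => simp only [map_add, ha, hb]
  | tmul x y => simp [biTensor_tmul, Hh.one_mul]

lemma CR (f : H →ₗ[k] H ⊗[k] H) (t : H ⊗[k] H) :
    TensorProduct.lift (biTensor Hh.mul Hh.mul)
        (TensorProduct.map f (Hh.counit.smulRight (Hh.one ⊗ₜ[k] Hh.one)) t)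
      = TensorProduct.map Hh.aut.toLinearMap Hh.aut.toLinearMap
          (f ((TensorProduct.rid k H) (TensorProduct.map LinearMap.id Hh.counit t))) := by
  induction t using TensorProduct.induction_on with
  | zero => simp
  | add a b ha hb => simp only [map_add, ha, hb]
  | tmul x y =>
    simp only [TensorProduct.map_tmul, LinearMap.smulRight_apply,
      TensorProduct.lift.tmul, TensorProduct.rid_tmul, LinearMap.id_coe, id_eq,
      TensorProduct.tmul_smul, map_smul, LinearMap.smul_apply]
    rw [Hh.mulB_one_r]

lemma CL (g : H →ₗ[k] H ⊗[k] H) (t : H ⊗[k] H) :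
    TensorProduct.lift (biTensor Hh.mul Hh.mul)
        (TensorProduct.map (Hh.counit.smulRight (Hh.one ⊗ₜ[k] Hh.one)) g t)
      = TensorProduct.map Hh.aut.toLinearMap Hh.aut.toLinearMap
          (g ((TensorProduct.lid k H) (TensorProduct.map Hh.counit LinearMap.id t))) := by
  induction t using TensorProduct.induction_on with
  | zero => simp
  | add a b ha hb => simp only [map_add, ha, hb]
  | tmul x y =>
    simp only [TensorProduct.map_tmul, LinearMap.smulRight_apply,
      TensorProduct.lift.tmul, TensorProduct.lid_tmul, LinearMap.id_coe, id_eq,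
      map_smul, LinearMap.smul_apply]
    rw [Hh.mulB_one_l]

lemma mulB_assoc (u v w : H ⊗[k] H) :
    biTensor Hh.mul Hh.mul
        (TensorProduct.map Hh.aut.toLinearMap Hh.aut.toLinearMap u)
        (biTensor Hh.mul Hh.mul v w)
      = biTensor Hh.mul Hh.mul (biTensor Hh.mul Hh.mul u v)
          (TensorProduct.map Hh.aut.toLinearMap Hh.aut.toLinearMap w) := by
  induction u using TensorProduct.induction_on with
  | zero => simp
  | add a b ha hb => simp only [map_add, LinearMap.add_apply, ha, hb]
  | tmul x y =>
    induction v using TensorProduct.induction_on with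
    | zero => simp
    | add a b ha hb => simp only [map_add, LinearMap.add_apply, ha, hb]
    | tmul p q =>
      induction w using TensorProduct.induction_on with
      | zero => simp
      | add a b ha hb => simp only [map_add, ha, hb]
      | tmul r s =>
        simp only [TensorProduct.map_tmul, biTensor_tmul, LinearEquiv.coe_coe]
        rw [Hh.hom_assoc, Hh.hom_assoc]

lemma LA (f g : H →ₗ[k] H ⊗[k] H) (t : H ⊗[k] (H ⊗[k] H)) :
    TensorProduct.lift (biTensor Hh.mul Hh.mul)
        (TensorProduct.map
          (TensorProduct.map Hh.aut.toLinearMap Hh.aut.toLinearMap ∘ₗ f)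
          (TensorProduct.lift (biTensor Hh.mul Hh.mul) ∘ₗ TensorProduct.map Hh.comul g) t)
      = TensorProduct.lift (biTensor Hh.mul Hh.mul)
          (TensorProduct.map
            (TensorProduct.lift (biTensor Hh.mul Hh.mul) ∘ₗ TensorProduct.map f Hh.comul)
            (TensorProduct.map Hh.aut.toLinearMap Hh.aut.toLinearMap ∘ₗ g)
            ((TensorProduct.assoc k H H H).symm t)) := by
  induction t using TensorProduct.induction_on with
  | zero => simp
  | add a b ha hb => simp only [map_add, ha, hb]
  | tmul x u =>
    induction u using TensorProduct.induction_on with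
    | zero => simp
    | add a b ha hb => simp only [TensorProduct.tmul_add, map_add, ha, hb]
    | tmul y z =>
      simp only [TensorProduct.assoc_symm_tmul, TensorProduct.map_tmul,
        LinearMap.comp_apply, TensorProduct.lift.tmul]
      rw [Hh.mulB_assoc]

lemma convFe_map :
    TensorProduct.lift (biTensor Hh.mul Hh.mul)
        ∘ₗ TensorProduct.map (Hh.comul ∘ₗ Hh.antipode) Hh.comul ∘ₗ Hh.comul
      = Hh.counit.smulRight (Hh.one ⊗ₜ[k] Hh.one) := by
  ext c; simpa using Hh.convFe c

lemma convEG_map :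
    TensorProduct.lift (biTensor Hh.mul Hh.mul)
        ∘ₗ TensorProduct.map Hh.comul
            (TensorProduct.map Hh.antipode Hh.antipode
              ∘ₗ (TensorProduct.comm k H H).toLinearMap ∘ₗ Hh.comul)
          ∘ₗ Hh.comul
      = Hh.counit.smulRight (Hh.one ⊗ₜ[k] Hh.one) := by
  ext c; simpa using Hh.convEG c

lemma Fsigma : (Hh.comul ∘ₗ Hh.antipode) ∘ₗ Hh.aut.toLinearMap
    = TensorProduct.map Hh.aut.toLinearMap Hh.aut.toLinearMap
        ∘ₗ (Hh.comul ∘ₗ Hh.antipode) := by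
  apply LinearMap.ext; intro x
  simp only [LinearMap.comp_apply, LinearEquiv.coe_coe]
  rw [Hh.antipode_aut, Hh.comul_aut]

lemma Gsigma :
    (TensorProduct.map Hh.aut.toLinearMap Hh.aut.toLinearMap
        ∘ₗ (TensorProduct.map Hh.antipode Hh.antipode
            ∘ₗ (TensorProduct.comm k H H).toLinearMap ∘ₗ Hh.comul))
      ∘ₗ Hh.aut.toLinearMap
    = TensorProduct.map Hh.antipode Hh.antipode
        ∘ₗ (TensorProduct.comm k H H).toLinearMap ∘ₗ Hh.comul := by
  apply LinearMap.ext; intro x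
  simp only [LinearMap.comp_apply, LinearEquiv.coe_coe]
  rw [Hh.comul_aut]
  generalize Hh.comul x = u
  induction u using TensorProduct.induction_on with
  | zero => simp
  | add a b ha hb => simp only [map_add, ha, hb]
  | tmul a b =>
    simp [Hh.antipode_aut, Hh.aut_aut]

lemma CCgen2 {V : Type u} [AddCommGroup V] [Module k V]
    (f : H →ₗ[k] V) (y : H) (u : H ⊗[k] H) :
    TensorProduct.map f (Hh.counit.smulRight y) ((TensorProduct.comm k H H) u)
      = (f ((TensorProduct.lid k H) (TensorProduct.map Hh.counit LinearMap.id u)))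
          ⊗ₜ[k] y := by
  induction u using TensorProduct.induction_on with
  | zero => simp
  | add a b ha hb => simp only [map_add, ha, hb, TensorProduct.add_tmul]
  | tmul x z =>
    simp only [TensorProduct.comm_tmul, TensorProduct.map_tmul,
      LinearMap.smulRight_apply, TensorProduct.lid_tmul, map_smul,
      TensorProduct.smul_tmul, TensorProduct.tmul_smul, LinearMap.id_coe, id_eq]

/-- The antipode of a monoidal Hom-Hopf algebra is anti-comultiplicative. -/
lemma comul_antipode (h : H) :
    Hh.comul (Hh.antipode h)
      = TensorProduct.map Hh.antipode Hh.antipode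
          ((TensorProduct.comm k H H) (Hh.comul h)) := by
  -- Way B : T = F h
  have wayB : TensorProduct.lift (biTensor Hh.mul Hh.mul)
      (TensorProduct.map (Hh.comul ∘ₗ Hh.antipode)
        (TensorProduct.lift (biTensor Hh.mul Hh.mul)
          ∘ₗ TensorProduct.map Hh.comul
              (TensorProduct.map Hh.antipode Hh.antipode
                ∘ₗ (TensorProduct.comm k H H).toLinearMap ∘ₗ Hh.comul)
            ∘ₗ Hh.comul)
        (Hh.comul h))
      = (Hh.comul ∘ₗ Hh.antipode) h := by
    rw [Hh.convEG_map, Hh.CR, Hh.counit_comul_right, Hh.aut_symm_eq]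
    have e1 : (Hh.comul ∘ₗ Hh.antipode) (Hh.aut h)
        = TensorProduct.map Hh.aut.toLinearMap Hh.aut.toLinearMap
            ((Hh.comul ∘ₗ Hh.antipode) h) := LinearMap.congr_fun Hh.Fsigma h
    rw [e1, mmap, Hh.sigma_sigma, TensorProduct.map_id, LinearMap.id_apply]
  -- Way A : T = G h
  have wayA : TensorProduct.lift (biTensor Hh.mul Hh.mul)
      (TensorProduct.map (Hh.comul ∘ₗ Hh.antipode)
        (TensorProduct.lift (biTensor Hh.mul Hh.mul)
          ∘ₗ TensorProduct.map Hh.comul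
              (TensorProduct.map Hh.antipode Hh.antipode
                ∘ₗ (TensorProduct.comm k H H).toLinearMap ∘ₗ Hh.comul)
            ∘ₗ Hh.comul)
        (Hh.comul h))
      = (TensorProduct.map Hh.antipode Hh.antipode
          ∘ₗ (TensorProduct.comm k H H).toLinearMap ∘ₗ Hh.comul) h := by
    have a1 : TensorProduct.map (Hh.comul ∘ₗ Hh.antipode)
        (TensorProduct.lift (biTensor Hh.mul Hh.mul)
          ∘ₗ TensorProduct.map Hh.comul
              (TensorProduct.map Hh.antipode Hh.antipode
                ∘ₗ (TensorProduct.comm k H H).toLinearMap ∘ₗ Hh.comul)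
            ∘ₗ Hh.comul)
        (Hh.comul h)
        = TensorProduct.map (Hh.comul ∘ₗ Hh.antipode)
            (TensorProduct.lift (biTensor Hh.mul Hh.mul)
              ∘ₗ TensorProduct.map Hh.comul
                  (TensorProduct.map Hh.antipode Hh.antipode
                    ∘ₗ (TensorProduct.comm k H H).toLinearMap ∘ₗ Hh.comul))
            (TensorProduct.map LinearMap.id Hh.comul (Hh.comul h)) := by
      rw [mmap]
      simp only [LinearMap.comp_id, LinearMap.comp_assoc]
    rw [a1, Hh.R1, mmap, LinearMap.comp_id, Hh.Fsigma, Hh.LA,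
      LinearEquiv.symm_apply_apply, mmap]
    have a5 : (TensorProduct.lift (biTensor Hh.mul Hh.mul)
          ∘ₗ TensorProduct.map (Hh.comul ∘ₗ Hh.antipode) Hh.comul) ∘ₗ Hh.comul
        = Hh.counit.smulRight (Hh.one ⊗ₜ[k] Hh.one) := by
      rw [LinearMap.comp_assoc]; exact Hh.convFe_map
    have a6 : (TensorProduct.map Hh.aut.toLinearMap Hh.aut.toLinearMap
          ∘ₗ (TensorProduct.map Hh.antipode Hh.antipode
              ∘ₗ (TensorProduct.comm k H H).toLinearMap ∘ₗ Hh.comul))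
          ∘ₗ Hh.aut.toLinearMap
        = TensorProduct.map Hh.antipode Hh.antipode
            ∘ₗ (TensorProduct.comm k H H).toLinearMap ∘ₗ Hh.comul := Hh.Gsigma
    rw [a5, a6, Hh.CL, Hh.counit_comul_left, Hh.aut_symm_eq]
    have e2 : (TensorProduct.map Hh.antipode Hh.antipode
          ∘ₗ (TensorProduct.comm k H H).toLinearMap ∘ₗ Hh.comul) (Hh.aut h)
        = TensorProduct.map Hh.aut.toLinearMap Hh.aut.toLinearMap
            ((TensorProduct.map Hh.antipode Hh.antipode
              ∘ₗ (TensorProduct.comm k H H).toLinearMap ∘ₗ Hh.comul) h) := by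
      have := LinearMap.congr_fun Hh.Gsigma h
      simp only [LinearMap.comp_apply, LinearEquiv.coe_coe] at this ⊢
      rw [← this, mmap, Hh.sigma_sigma, TensorProduct.map_id, LinearMap.id_apply]
    rw [e2, mmap, Hh.sigma_sigma, TensorProduct.map_id, LinearMap.id_apply]
  have := wayB.symm.trans wayA
  simpa using this

end HomHopfAlgebra




end AuxHopf

section AuxMain

open TensorProduct

variable {k : Type v} [CommRing k] {H A : Type u}
  [AddCommGroup H] [Module k H] [AddCommGroup A] [Module k A]
  {M : Type u} [AddCommGroup M] [Module k M]
  (Hh : HomHopfAlgebra k H) (AA : HomComoduleAlgebra k Hh A)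
  (Φ : TotalIntegral k Hh AA) (Mm : RelHopfModule k Hh AA M)

lemma lam_aut_comm :
    ∀ x, lamMap Φ.toFun Mm (TensorProduct.congr Mm.aut Hh.aut x)
        = Mm.aut (lamMap Φ.toFun Mm x) := by
  intro x
  induction x using TensorProduct.induction_on with
  | zero => simp
  | add a b ha hb => simp only [map_add, ha, hb]
  | tmul m h =>
    simp only [lamMap, LinearMap.comp_apply, TensorProduct.congr_tmul,
      TensorProduct.map_tmul, LinearEquiv.coe_coe, LinearMap.id_coe, id_eq]
    rw [Mm.coact_aut]
    generalize Mm.coact m = t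
    induction t using TensorProduct.induction_on with
    | zero => simp
    | add a b ha hb =>
      simp only [map_add, TensorProduct.add_tmul] at ha hb ⊢
      simp only [ha, hb]
    | tmul n g =>
      simp only [TensorProduct.map_tmul, TensorProduct.assoc_tmul,
        TensorProduct.lift.tmul, LinearMap.comp_apply, LinearEquiv.coe_coe,
        LinearMap.id_coe, id_eq]
      rw [LinearEquiv.symm_apply_apply, Hh.antipode_aut, ← Hh.aut_mul,
        Φ.commutes, Mm.aut_act, LinearEquiv.apply_symm_apply]


/-- coaction of `μ⁻¹`. -/
lemma Mcoact_aut_symm (m : M) :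
    Mm.coact (Mm.aut.symm m)
      = TensorProduct.map Mm.aut.symm.toLinearMap Hh.aut.symm.toLinearMap
          (Mm.coact m) := by
  have h1 := Mm.coact_aut (Mm.aut.symm m)
  rw [Mm.aut.apply_symm_apply] at h1
  rw [h1, mmap]
  have e1 : Mm.aut.symm.toLinearMap ∘ₗ Mm.aut.toLinearMap = LinearMap.id := by
    ext x; simp
  have e2 : Hh.aut.symm.toLinearMap ∘ₗ Hh.aut.toLinearMap = LinearMap.id := by
    ext x; simp
  rw [e1, e2, TensorProduct.map_id]
  rfl

/-- The `w₀` inner map of `lamMap`. -/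
noncomputable def w0 : H ⊗[k] H →ₗ[k] A :=
  Φ.toFun.comp ((TensorProduct.lift Hh.mul).comp
    (TensorProduct.map Hh.antipode Hh.aut.toLinearMap))

/-- The coaction-expanded form `W` of `w₀`. -/
noncomputable def WW : H ⊗[k] H →ₗ[k] A ⊗[k] H :=
  TensorProduct.map Φ.toFun LinearMap.id
    ∘ₗ TensorProduct.lift (biTensor Hh.mul Hh.mul)
    ∘ₗ TensorProduct.map
        (TensorProduct.map Hh.antipode Hh.antipode ∘ₗ (TensorProduct.comm k H H).toLinearMap)
        (TensorProduct.map Hh.aut.toLinearMap Hh.aut.toLinearMap)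
    ∘ₗ TensorProduct.map Hh.comul Hh.comul

/-- The flattened form `W₂` (tower of the first leg already expanded). -/
noncomputable def W2 : (H ⊗[k] H) ⊗[k] H →ₗ[k] A ⊗[k] H :=
  TensorProduct.map Φ.toFun LinearMap.id
    ∘ₗ TensorProduct.lift (biTensor Hh.mul Hh.mul)
    ∘ₗ TensorProduct.map
        (TensorProduct.map Hh.antipode Hh.antipode ∘ₗ (TensorProduct.comm k H H).toLinearMap)
        ((TensorProduct.map Hh.aut.toLinearMap Hh.aut.toLinearMap) ∘ₗ Hh.comul)

lemma coact_w0 (v : H ⊗[k] H) :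
    AA.coact (w0 Hh AA Φ v) = WW Hh AA Φ v := by
  have c1 : AA.coact (w0 Hh AA Φ v)
      = TensorProduct.map Φ.toFun LinearMap.id
          (Hh.comul (TensorProduct.lift Hh.mul
            (TensorProduct.map Hh.antipode Hh.aut.toLinearMap v))) := by
    rw [w0]; simp only [LinearMap.comp_apply]; rw [Φ.colinear]
  rw [c1, Hh.comul_lift_mul, mmap, WW]
  simp only [LinearMap.comp_apply]
  congr 2
  rw [mmap]
  congr 2
  · apply LinearMap.ext; intro x
    simpa using Hh.comul_antipode x
  · exact Hh.comul_sigma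

/-- Step A : compat + colinearity assembly. -/
lemma stepA (y : M ⊗[k] (H ⊗[k] H)) :
    Mm.coact (TensorProduct.lift Mm.act
        (TensorProduct.map Mm.aut.symm.toLinearMap (w0 Hh AA Φ) y))
      = TensorProduct.lift ((biTensor Mm.act Hh.mul).compl₂ (WW Hh AA Φ))
          (TensorProduct.map
            ((TensorProduct.map Mm.aut.symm.toLinearMap Hh.aut.toLinearMap) ∘ₗ Mm.coact)
            LinearMap.id y) := by
  induction y using TensorProduct.induction_on with
  | zero => simp
  | add a b ha hb => simp only [map_add, ha, hb]
  | tmul n v =>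
    simp only [TensorProduct.map_tmul, TensorProduct.lift.tmul, LinearMap.comp_apply,
      LinearEquiv.coe_coe, LinearMap.id_coe, id_eq, LinearMap.compl₂_apply]
    rw [Mm.compat, Mcoact_aut_symm Hh AA Mm, coact_w0 Hh AA Φ]
    congr 1
    rw [Hh.aut_symm_toLinearMap]

/-- generic push of a first-slot map through `assoc` on a pure right factor. -/
lemma pushF {M' N' P' Q' : Type u}
    [AddCommGroup M'] [Module k M'] [AddCommGroup N'] [Module k N']
    [AddCommGroup P'] [Module k P'] [AddCommGroup Q'] [Module k Q']
    (f : M' →ₗ[k] Q') (t : M' ⊗[k] N') (p : P') :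
    TensorProduct.map f LinearMap.id ((TensorProduct.assoc k M' N' P') (t ⊗ₜ[k] p))
      = (TensorProduct.assoc k Q' N' P')
          ((TensorProduct.map (TensorProduct.map f LinearMap.id) LinearMap.id)
            ((t ⊗ₜ[k] p))) := by
  induction t using TensorProduct.induction_on with
  | zero => simp
  | add a b ha hb => simp only [TensorProduct.add_tmul, map_add, ha, hb]
  | tmul m n => simp

/-- CC step : rewrite the module coassociativity into towered form. -/
lemma CCstep (m : M) :
    TensorProduct.map
        ((TensorProduct.map Mm.aut.symm.toLinearMap Hh.aut.toLinearMap) ∘ₗ Mm.coact)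
        LinearMap.id (Mm.coact m)
      = (TensorProduct.assoc k M H H).symm
          (TensorProduct.map (Mm.aut.symm.toLinearMap ∘ₗ Mm.aut.symm.toLinearMap)
            (Hh.comul ∘ₗ Hh.aut.toLinearMap) (Mm.coact m)) := by
  have e0 : TensorProduct.map Mm.coact Hh.aut.symm.toLinearMap (Mm.coact m)
      = (TensorProduct.assoc k M H H).symm
          (TensorProduct.map Mm.aut.symm.toLinearMap Hh.comul (Mm.coact m)) := by
    rw [← Mm.hom_coassoc m, LinearEquiv.symm_apply_apply]
  have e1 : TensorProduct.map
        ((TensorProduct.map Mm.aut.symm.toLinearMap Hh.aut.toLinearMap) ∘ₗ Mm.coact)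
        LinearMap.id (Mm.coact m)
      = TensorProduct.map (TensorProduct.map Mm.aut.symm.toLinearMap Hh.aut.toLinearMap)
          Hh.aut.toLinearMap
          (TensorProduct.map Mm.coact Hh.aut.symm.toLinearMap (Mm.coact m)) := by
    rw [mmap]
    congr 2
    apply LinearMap.ext; intro x
    simp [Hh.aut_aut]
  rw [e1, e0, TensorProduct.map_map_assoc_symm, mmap]
  congr 2
  rw [Hh.comul_sigma]


/-- The right comultiplication tower precomposed with `α`. -/
noncomputable def TOW : H →ₗ[k] H ⊗[k] (H ⊗[k] H) :=
  TensorProduct.map LinearMap.id Hh.comul ∘ₗ Hh.comul ∘ₗ Hh.aut.toLinearMap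

lemma T2s : TOW Hh
    = TensorProduct.map LinearMap.id
        (TensorProduct.map Hh.aut.toLinearMap Hh.aut.toLinearMap)
      ∘ₗ (TensorProduct.assoc k H H H).toLinearMap
      ∘ₗ TensorProduct.map Hh.comul Hh.aut.toLinearMap ∘ₗ Hh.comul := by
  apply LinearMap.ext; intro d
  simp only [TOW, LinearMap.comp_apply, LinearEquiv.coe_coe]
  rw [show Hh.comul (Hh.aut d)
      = TensorProduct.map Hh.aut.toLinearMap Hh.aut.toLinearMap (Hh.comul d)
      from LinearMap.congr_fun Hh.comul_sigma d]
  rw [mmap]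
  simp only [LinearMap.id_comp, LinearMap.comp_id]
  rw [Hh.comul_sigma, mmap_unfuse_r2, Hh.H1]

lemma WWW2 (v h : H) :
    WW Hh AA Φ (v ⊗ₜ[k] h) = W2 Hh AA Φ ((Hh.comul v) ⊗ₜ[k] h) := by
  simp [WW, W2]

/-- Step B : pull the second comultiplication into a contiguous tower. -/
lemma stepB (t : M ⊗[k] H) (h : H) :
    TensorProduct.lift ((biTensor Mm.act Hh.mul).compl₂ (WW Hh AA Φ))
        ((TensorProduct.assoc k (M ⊗[k] H) H H)
          (((TensorProduct.assoc k M H H).symm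
            (TensorProduct.map (Mm.aut.symm.toLinearMap ∘ₗ Mm.aut.symm.toLinearMap)
              (Hh.comul ∘ₗ Hh.aut.toLinearMap) t)) ⊗ₜ[k] h))
      = TensorProduct.lift ((biTensor Mm.act Hh.mul).compl₂ (W2 Hh AA Φ))
          ((TensorProduct.assoc k (M ⊗[k] H) (H ⊗[k] H) H)
            ((TensorProduct.map (TensorProduct.assoc k M H (H ⊗[k] H)).symm.toLinearMap
              LinearMap.id)
              (((TensorProduct.map (Mm.aut.symm.toLinearMap ∘ₗ Mm.aut.symm.toLinearMap)
                  (TOW Hh)) t) ⊗ₜ[k] h))) := by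
  induction t using TensorProduct.induction_on with
  | zero => simp
  | add a b ha hb =>
    simp only [map_add, TensorProduct.add_tmul, ha, hb]
  | tmul n g =>
    simp only [TensorProduct.map_tmul, LinearMap.comp_apply, LinearEquiv.coe_coe, TOW]
    generalize Hh.comul (Hh.aut g) = s
    induction s using TensorProduct.induction_on with
    | zero => simp
    | add a b ha hb =>
      simp only [map_add, TensorProduct.tmul_add, TensorProduct.add_tmul, ha, hb]
    | tmul u v =>
      simp only [TensorProduct.map_tmul, TensorProduct.assoc_symm_tmul,
        TensorProduct.assoc_tmul, TensorProduct.lift.tmul, LinearMap.compl₂_apply,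
        LinearMap.id_coe, id_eq]
      rw [WWW2]


/-- normalize the RHS of the colinearity statement. -/
lemma stepR (m : M) (h : H) :
    TensorProduct.map (lamMap Φ.toFun Mm) LinearMap.id (Gcoact Hh Mm.aut (m ⊗ₜ[k] h))
      = TensorProduct.map
          (TensorProduct.lift Mm.act
            ∘ₗ TensorProduct.map Mm.aut.symm.toLinearMap (w0 Hh AA Φ)
            ∘ₗ (TensorProduct.assoc k M H H).toLinearMap) Hh.aut.toLinearMap
          ((TensorProduct.assoc k (M ⊗[k] H) H H).symm
            (((TensorProduct.map Mm.aut.symm.toLinearMap Hh.aut.toLinearMap)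
                (Mm.coact m)) ⊗ₜ[k] (Hh.comul h))) := by
  have g1 : Gcoact Hh Mm.aut (m ⊗ₜ[k] h)
      = (TensorProduct.assoc k M H H).symm
          ((Mm.aut.symm m) ⊗ₜ[k]
            (TensorProduct.map LinearMap.id Hh.aut.toLinearMap (Hh.comul h))) := by
    simp [Gcoact]
  rw [g1]
  generalize Hh.comul h = u
  induction u using TensorProduct.induction_on with
  | zero => simp
  | add a b ha hb => simp only [map_add, TensorProduct.tmul_add, ha, hb]
  | tmul p q =>
    simp only [TensorProduct.map_tmul, TensorProduct.assoc_symm_tmul,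
      LinearMap.id_coe, id_eq, LinearMap.comp_apply, LinearEquiv.coe_coe]
    congr 1
    simp only [lamMap, LinearMap.comp_apply, TensorProduct.map_tmul,
      LinearMap.id_coe, id_eq]
    rw [Mcoact_aut_symm Hh AA Mm, Hh.aut_symm_toLinearMap]
    rfl

lemma TTCP (t' : H ⊗[k] (H ⊗[k] H)) (p q : H) :
    TensorProduct.tensorTensorTensorComm k H (H ⊗[k] H) H H (t' ⊗ₜ[k] (p ⊗ₜ[k] q))
      = TensorProduct.map ((TensorProduct.mk k H H).flip p)
          ((TensorProduct.mk k (H ⊗[k] H) H).flip q) t' := by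
  induction t' using TensorProduct.induction_on with
  | zero => simp
  | add a b ha hb => simp only [TensorProduct.add_tmul, map_add, ha, hb]
  | tmul x w => simp [TensorProduct.tensorTensorTensorComm_tmul]

lemma ASY (t : (H ⊗[k] H) ⊗[k] H) :
    (TensorProduct.assoc k H H H).symm
        (TensorProduct.map LinearMap.id
          (TensorProduct.map Hh.aut.toLinearMap Hh.aut.toLinearMap)
          ((TensorProduct.assoc k H H H) t))
      = TensorProduct.map (TensorProduct.map LinearMap.id Hh.aut.toLinearMap)
          Hh.aut.toLinearMap t := by
  induction t using TensorProduct.induction_on with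
  | zero => simp
  | add a b ha hb => simp only [map_add, ha, hb]
  | tmul u z =>
    induction u using TensorProduct.induction_on with
    | zero => simp
    | add a b ha hb => simp only [TensorProduct.add_tmul, map_add, ha, hb]
    | tmul x y => simp

/-- Evaluation of the big LHS into a canonical two-slot form. -/
lemma EVAL (n' : M) (Z : H ⊗[k] (H ⊗[k] H)) (h : H) :
    TensorProduct.lift ((biTensor Mm.act Hh.mul).compl₂ (W2 Hh AA Φ))
        ((TensorProduct.assoc k (M ⊗[k] H) (H ⊗[k] H) H)
          ((TensorProduct.assoc k M H (H ⊗[k] H)).symm (n' ⊗ₜ[k] Z) ⊗ₜ[k] h))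
      = TensorProduct.map
          ((Mm.act n') ∘ₗ Φ.toFun ∘ₗ TensorProduct.lift Hh.mul
            ∘ₗ TensorProduct.map LinearMap.id Hh.aut.toLinearMap)
          (TensorProduct.lift Hh.mul
            ∘ₗ TensorProduct.map LinearMap.id
                (TensorProduct.lift Hh.mul
                  ∘ₗ TensorProduct.map LinearMap.id Hh.aut.toLinearMap)
            ∘ₗ (TensorProduct.assoc k H H H).toLinearMap)
          (TensorProduct.tensorTensorTensorComm k H (H ⊗[k] H) H H
            (TensorProduct.map
              (TensorProduct.map Hh.antipode (TensorProduct.map LinearMap.id Hh.antipode)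
                ∘ₗ (TensorProduct.comm k (H ⊗[k] H) H).toLinearMap
                ∘ₗ (TensorProduct.assoc k H H H).symm.toLinearMap)
              Hh.comul (Z ⊗ₜ[k] h))) := by
  induction Z using TensorProduct.induction_on with
  | zero => simp
  | add a b ha hb =>
    simp only [TensorProduct.tmul_add, TensorProduct.add_tmul, map_add, ha, hb]
  | tmul a w =>
    induction w using TensorProduct.induction_on with
    | zero => simp
    | add a' b' ha hb =>
      simp only [TensorProduct.tmul_add, TensorProduct.add_tmul, map_add, ha, hb]
    | tmul b c =>
      simp only [TensorProduct.assoc_symm_tmul, TensorProduct.assoc_tmul,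
        TensorProduct.map_tmul, TensorProduct.lift.tmul, LinearMap.compl₂_apply,
        LinearMap.comp_apply, LinearEquiv.coe_coe, LinearMap.id_coe, id_eq,
        TensorProduct.comm_tmul, W2, biTensor_tmul_left]
      generalize Hh.comul h = u
      induction u using TensorProduct.induction_on with
      | zero => simp
      | add a' b' ha hb =>
        simp only [TensorProduct.tmul_add, map_add, ha, hb,
          TensorProduct.tensorTensorTensorComm_tmul]
      | tmul p q =>
        simp [TensorProduct.tensorTensorTensorComm_tmul, biTensor_tmul_left]

/-- pointwise rearrangement: `x₁ ⋅ (S(α x₂) ⋅ α q) = (α x₁ ⋅ α (S x₂)) ⋅ q`. -/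
lemma LAM1 (q : H) (u : H ⊗[k] H) :
    (TensorProduct.lift Hh.mul
        ∘ₗ TensorProduct.map LinearMap.id
            (TensorProduct.lift Hh.mul
              ∘ₗ TensorProduct.map LinearMap.id Hh.aut.toLinearMap)
        ∘ₗ (TensorProduct.assoc k H H H).toLinearMap)
      (((TensorProduct.map LinearMap.id (Hh.antipode ∘ₗ Hh.aut.toLinearMap)) u) ⊗ₜ[k] q)
    = (Hh.mul.flip q)
        (TensorProduct.lift Hh.mul
          (TensorProduct.map Hh.aut.toLinearMap
            (Hh.aut.toLinearMap ∘ₗ Hh.antipode) u)) := by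
  induction u using TensorProduct.induction_on with
  | zero => simp
  | add a b ha hb => simp only [map_add, TensorProduct.add_tmul, ha, hb]
  | tmul x y =>
    simp only [TensorProduct.map_tmul, TensorProduct.assoc_tmul, LinearMap.comp_apply,
      TensorProduct.lift.tmul, LinearMap.id_coe, id_eq, LinearEquiv.coe_coe,
      LinearMap.flip_apply]
    rw [Hh.antipode_aut]
    conv_lhs => rw [show x = Hh.aut (Hh.aut x) from (Hh.aut_aut x).symm]
    rw [Hh.hom_assoc, Hh.aut_aut]

/-- shuffle of the towered `g`-legs into convolution-ready form. -/
lemma SHZ (s : H ⊗[k] H) :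
    TensorProduct.map Hh.antipode (TensorProduct.map LinearMap.id Hh.antipode)
        ((TensorProduct.comm k (H ⊗[k] H) H)
          ((TensorProduct.assoc k H H H).symm
            (TensorProduct.map LinearMap.id
                (TensorProduct.map Hh.aut.toLinearMap Hh.aut.toLinearMap)
              ((TensorProduct.assoc k H H H)
                ((TensorProduct.map Hh.comul Hh.aut.toLinearMap) s)))))
      = TensorProduct.map Hh.antipode
          ((TensorProduct.map LinearMap.id (Hh.antipode ∘ₗ Hh.aut.toLinearMap))
            ∘ₗ Hh.comul)
          ((TensorProduct.comm k H H) s) := by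
  induction s using TensorProduct.induction_on with
  | zero => simp
  | add a b ha hb => simp only [map_add, ha, hb]
  | tmul x y =>
    simp only [TensorProduct.map_tmul, TensorProduct.comm_tmul, LinearMap.comp_apply,
      LinearEquiv.coe_coe, LinearMap.id_coe, id_eq]
    generalize Hh.comul x = r
    induction r using TensorProduct.induction_on with
    | zero => simp
    | add a b ha hb =>
      simp only [map_add, TensorProduct.add_tmul, TensorProduct.tmul_add, ha, hb]
    | tmul u v =>
      simp [Hh.aut_aut]

set_option maxHeartbeats 1000000 in
set_option maxHeartbeats 1000000 in
set_option maxHeartbeats 1000000 in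
/-- Step C : the convolution collapse, generic in `t` and `h`. -/
lemma stepC (t : M ⊗[k] H) (h : H) :
    TensorProduct.lift ((biTensor Mm.act Hh.mul).compl₂ (W2 Hh AA Φ))
        ((TensorProduct.assoc k (M ⊗[k] H) (H ⊗[k] H) H)
          ((TensorProduct.map (TensorProduct.assoc k M H (H ⊗[k] H)).symm.toLinearMap
            LinearMap.id)
            (((TensorProduct.map (Mm.aut.symm.toLinearMap ∘ₗ Mm.aut.symm.toLinearMap)
                (TensorProduct.map LinearMap.id
                    (TensorProduct.map Hh.aut.toLinearMap Hh.aut.toLinearMap)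
                  ∘ₗ (TensorProduct.assoc k H H H).toLinearMap
                  ∘ₗ TensorProduct.map Hh.comul Hh.aut.toLinearMap ∘ₗ Hh.comul)) t)
              ⊗ₜ[k] h)))
      = TensorProduct.map
          (TensorProduct.lift Mm.act
            ∘ₗ TensorProduct.map Mm.aut.symm.toLinearMap (w0 Hh AA Φ)
            ∘ₗ (TensorProduct.assoc k M H H).toLinearMap) Hh.aut.toLinearMap
          ((TensorProduct.assoc k (M ⊗[k] H) H H).symm
            (((TensorProduct.map Mm.aut.symm.toLinearMap Hh.aut.toLinearMap) t)
              ⊗ₜ[k] (Hh.comul h))) := by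
  induction t using TensorProduct.induction_on with
  | zero => simp
  | add a b ha hb => simp only [map_add, TensorProduct.add_tmul, ha, hb]
  | tmul n g =>
    simp only [TensorProduct.map_tmul, LinearMap.comp_apply, LinearEquiv.coe_coe,
      LinearMap.id_coe, id_eq]
    rw [EVAL Hh AA Φ Mm]
    simp only [TensorProduct.map_tmul, LinearMap.comp_apply, LinearEquiv.coe_coe]
    rw [ASY Hh, ← TensorProduct.map_comm, ← TensorProduct.map_comm, mmap, mmap]
    have hfuse : ((TensorProduct.map LinearMap.id Hh.antipode
          ∘ₗ TensorProduct.map LinearMap.id Hh.aut.toLinearMap)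
            ∘ₗ Hh.comul : H →ₗ[k] H ⊗[k] H)
        = (TensorProduct.map LinearMap.id (Hh.antipode ∘ₗ Hh.aut.toLinearMap))
            ∘ₗ Hh.comul := by
      apply LinearMap.ext; intro x
      simp only [LinearMap.comp_apply]
      rw [mmap]
      simp only [LinearMap.id_comp]
    have hfuse2 : ((Hh.antipode ∘ₗ Hh.aut.toLinearMap) ∘ₗ Hh.aut.toLinearMap)
        = Hh.antipode := by
      apply LinearMap.ext; intro x; simp [Hh.aut_aut]
    rw [hfuse, hfuse2]
    generalize Hh.comul h = u
    induction u using TensorProduct.induction_on with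
    | zero => simp
    | add a b ha hb => simp only [map_add, TensorProduct.tmul_add, ha, hb]
    | tmul p q =>
      rw [TTCP, mmap, mmap]
      have hB : ((TensorProduct.lift Hh.mul
            ∘ₗ TensorProduct.map LinearMap.id
                (TensorProduct.lift Hh.mul
                  ∘ₗ TensorProduct.map LinearMap.id Hh.aut.toLinearMap)
            ∘ₗ (TensorProduct.assoc k H H H).toLinearMap)
              ∘ₗ (TensorProduct.mk k (H ⊗[k] H) H).flip q)
            ∘ₗ ((TensorProduct.map LinearMap.id (Hh.antipode ∘ₗ Hh.aut.toLinearMap))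
                ∘ₗ Hh.comul)
          = Hh.counit.smulRight (Hh.aut q) := by
        apply LinearMap.ext; intro x
        simp only [LinearMap.comp_apply, LinearMap.flip_apply, TensorProduct.mk_apply,
          LinearEquiv.coe_coe]
        have hl := LAM1 Hh q (Hh.comul x)
        simp only [LinearMap.comp_apply, LinearEquiv.coe_coe] at hl
        rw [hl, Hh.kappa1]
        simp only [map_smul, LinearMap.smul_apply, LinearMap.flip_apply,
          LinearMap.smulRight_apply]
        rw [Hh.one_mul]
      rw [hB, Hh.CCgen2, Hh.counit_comul_left, Hh.aut_symm_eq]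
      simp only [TensorProduct.assoc_symm_tmul, TensorProduct.map_tmul,
        TensorProduct.assoc_tmul, TensorProduct.lift.tmul, LinearMap.comp_apply,
        LinearEquiv.coe_coe, LinearMap.flip_apply, TensorProduct.mk_apply,
        LinearMap.id_coe, id_eq, w0]

end AuxMain



section Statements

variable {k : Type v} [CommRing k] {H A : Type u}
  [AddCommGroup H] [Module k H] [AddCommGroup A] [Module k A]

/-- For a total integral `φ` and a relative Hom-Hopf module `(M,μ)`,
the map `λ_M(m⊗h) = μ⁻¹(m₍₀₎)·φ(S(m₍₁₎)α(h))` is a morphism of right `(H,α)`-Hom-comodules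
from `M ⊗ H` (with automorphism `μ ⊗ α` and coaction `ρ(m⊗h) = (μ⁻¹(m)⊗h₍₁₎) ⊗ α(h₍₂₎)`)
to `M`: `ρ_M(λ_M(m⊗h)) = λ_M(μ⁻¹(m)⊗h₍₁₎) ⊗ α(h₍₂₎)`. -/
theorem lam_is_comodule_morphism {M : Type u} [AddCommGroup M] [Module k M]
    (Hh : HomHopfAlgebra k H) (AA : HomComoduleAlgebra k Hh A)
    (Φ : TotalIntegral k Hh AA) (Mm : RelHopfModule k Hh AA M) :
    (∀ x, lamMap Φ.toFun Mm (TensorProduct.congr Mm.aut Hh.aut x)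
        = Mm.aut (lamMap Φ.toFun Mm x)) ∧
    Mm.coact.comp (lamMap Φ.toFun Mm)
      = (TensorProduct.map (lamMap Φ.toFun Mm) LinearMap.id).comp (Gcoact Hh Mm.aut) := by
  constructor
  · exact lam_aut_comm Hh AA Φ Mm
  · apply TensorProduct.ext'
    intro m h
    simp only [LinearMap.comp_apply]
    have l1 : lamMap Φ.toFun Mm (m ⊗ₜ[k] h)
        = TensorProduct.lift Mm.act
            (TensorProduct.map Mm.aut.symm.toLinearMap (w0 Hh AA Φ)
              ((TensorProduct.assoc k M H H) ((Mm.coact m) ⊗ₜ[k] h))) := by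
      simp [lamMap, w0]
    rw [l1, stepA Hh AA Φ Mm, pushF]
    simp only [TensorProduct.map_tmul, LinearMap.id_coe, id_eq]
    rw [CCstep Hh AA Mm, stepB Hh AA Φ Mm, T2s, stepC Hh AA Φ Mm,
      ← stepR Hh AA Φ Mm]

end Statements
end

section
/- Let (H,α) be a monoidal Hom-Hopf algebra and (A,β) a right (H,α)-Hom-comodule algebra admitting a total integral φ:H→A. Then every relative Hom-Hopf module (M,μ) is injective as a right (H,α)-Hom-comodule relative to k-split monomorphisms: for every morphism of right (H,α)-Hom-comodules i:(N,ν)→(P,π) admitting a k-linear retraction p:P→N with p∘i=id_N and p∘π=ν∘p, and every morphism of right (H,α)-Hom-comodules f:(N,ν)→(M,μ), there exists a morphism of right (H,α)-Hom-comodules g:(P,π)→(M,μ) with g∘i=f. -/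
/- Preliminaries: monoidal Hom-structures (Caenepeel–Goyvaerts style), following the paper. -/

open TensorProduct

namespace HomProof
open TensorProduct LinearMap

section Helpers
variable {k : Type v} [CommRing k]

theorem mapmap {M N P Q U W : Type*}
    [AddCommGroup M] [Module k M] [AddCommGroup N] [Module k N]
    [AddCommGroup P] [Module k P] [AddCommGroup Q] [Module k Q]
    [AddCommGroup U] [Module k U] [AddCommGroup W] [Module k W]
    (f : P →ₗ[k] U) (g : Q →ₗ[k] W) (f' : M →ₗ[k] P) (g' : N →ₗ[k] Q) (w : M ⊗[k] N) :
    map f g (map f' g' w) = map (f ∘ₗ f') (g ∘ₗ g') w :=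
  LinearMap.congr_fun (TensorProduct.map_comp f g f' g').symm w

theorem mapcongr {M N P Q : Type*}
    [AddCommGroup M] [Module k M] [AddCommGroup N] [Module k N]
    [AddCommGroup P] [Module k P] [AddCommGroup Q] [Module k Q]
    {f f' : M →ₗ[k] P} {g g' : N →ₗ[k] Q}
    (hf : ∀ x, f x = f' x) (hg : ∀ y, g y = g' y) (w : M ⊗[k] N) :
    map f g w = map f' g' w := by
  rw [LinearMap.ext hf, LinearMap.ext hg]

end Helpers
end HomProof
namespace HomProof
open TensorProduct LinearMap

section Hopf
variable {k : Type v} [CommRing k] {H : Type u} [AddCommGroup H] [Module k H]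
variable (Hh : HomHopfAlgebra k H)

/-- left counit contraction -/
noncomputable def cL : H ⊗[k] H →ₗ[k] H :=
  (TensorProduct.lid k H).toLinearMap ∘ₗ map Hh.counit LinearMap.id

/-- right counit contraction -/
noncomputable def cR : H ⊗[k] H →ₗ[k] H :=
  (TensorProduct.rid k H).toLinearMap ∘ₗ map LinearMap.id Hh.counit

@[simp] theorem cL_tmul (x y : H) : cL Hh (x ⊗ₜ[k] y) = Hh.counit x • y := by
  simp [cL]

@[simp] theorem cR_tmul (x y : H) : cR Hh (x ⊗ₜ[k] y) = Hh.counit y • x := by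
  simp [cR]

theorem cL_comul (h : H) : cL Hh (Hh.comul h) = Hh.aut.symm h := by
  simpa [cL] using Hh.counit_comul_left h

theorem cR_comul (h : H) : cR Hh (Hh.comul h) = Hh.aut.symm h := by
  simpa [cR] using Hh.counit_comul_right h

theorem counit_aut_symm (x : H) : Hh.counit (Hh.aut.symm x) = Hh.counit x := by
  conv_rhs => rw [← Hh.aut.apply_symm_apply x, Hh.counit_aut]

theorem aut_aut (h : H) : Hh.aut (Hh.aut h) = h := by
  have key : ∀ x : H, Hh.aut.symm (Hh.aut.symm x) = x := by
    intro x
    have AX := Hh.hom_coassoc x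
    have E := congrArg (fun w => cL Hh (map LinearMap.id (cL Hh) w)) AX
    -- LHS of E
    have hL : cL Hh (map LinearMap.id (cL Hh)
        (map Hh.aut.symm.toLinearMap Hh.comul (Hh.comul x)))
        = Hh.aut.symm (Hh.aut.symm x) := by
      rw [mapmap]
      rw [mapcongr (f' := Hh.aut.symm.toLinearMap) (g' := Hh.aut.symm.toLinearMap)
        (fun y => by simp) (fun y => by simp [cL_comul])]
      have : ∀ w : H ⊗[k] H,
          cL Hh (map Hh.aut.symm.toLinearMap Hh.aut.symm.toLinearMap w)
          = Hh.aut.symm (cL Hh w) := by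
        intro w
        induction w using TensorProduct.induction_on with
        | zero => simp
        | tmul a b => simp [counit_aut_symm]
        | add u v hu hv => simp [hu, hv]
      rw [this, cL_comul]
    -- RHS of E
    have natA : ∀ w : (H ⊗[k] H) ⊗[k] H,
        map LinearMap.id (cL Hh) (TensorProduct.assoc k H H H w)
        = map (cR Hh) LinearMap.id w := by
      intro w
      induction w using TensorProduct.induction_on with
      | zero => simp
      | tmul a z =>
        induction a using TensorProduct.induction_on with
        | zero => simp
        | tmul a1 a2 => simp [smul_tmul', tmul_smul]
        | add u v hu hv => simp [add_tmul, hu, hv]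
      | add u v hu hv => simp [hu, hv]
    have hR : cL Hh (map LinearMap.id (cL Hh)
        (TensorProduct.assoc k H H H (map Hh.comul Hh.aut.toLinearMap (Hh.comul x))))
        = x := by
      rw [natA, mapmap]
      rw [mapcongr (f' := Hh.aut.symm.toLinearMap) (g' := Hh.aut.toLinearMap)
        (fun y => by simp [cR_comul]) (fun y => by simp)]
      have : ∀ w : H ⊗[k] H,
          cL Hh (map Hh.aut.symm.toLinearMap Hh.aut.toLinearMap w)
          = Hh.aut (cL Hh w) := by
        intro w
        induction w using TensorProduct.induction_on with
        | zero => simp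
        | tmul a b => simp [counit_aut_symm]
        | add u v hu hv => simp [hu, hv]
      rw [this, cL_comul, Hh.aut.apply_symm_apply]
    rw [hL, hR] at E
    exact E
  have := key (Hh.aut (Hh.aut h))
  simpa using this.symm

theorem aut_symm_apply (x : H) : Hh.aut.symm x = Hh.aut x := by
  conv_lhs => rw [← aut_aut Hh x]
  simp

theorem counit_aut' (x : H) : Hh.counit (Hh.aut x) = Hh.counit x := Hh.counit_aut x

end Hopf
end HomProof
namespace HomProof
open TensorProduct LinearMap

section Conv
variable {k : Type v} [CommRing k] {H : Type u} [AddCommGroup H] [Module k H]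
variable (Hh : HomHopfAlgebra k H)

noncomputable def mul2 : H ⊗[k] H →ₗ[k] H ⊗[k] H →ₗ[k] H ⊗[k] H := biTensor Hh.mul Hh.mul

noncomputable def lift2 : (H ⊗[k] H) ⊗[k] (H ⊗[k] H) →ₗ[k] H ⊗[k] H :=
  TensorProduct.lift (mul2 Hh)

noncomputable def aut2 : H ⊗[k] H →ₗ[k] H ⊗[k] H :=
  map Hh.aut.toLinearMap Hh.aut.toLinearMap

noncomputable def one2 : H ⊗[k] H := Hh.one ⊗ₜ[k] Hh.one

noncomputable def eC : H →ₗ[k] H ⊗[k] H := Hh.counit.smulRight (one2 Hh)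

noncomputable def DS : H →ₗ[k] H ⊗[k] H := Hh.comul ∘ₗ Hh.antipode

noncomputable def gm : H →ₗ[k] H ⊗[k] H :=
  (TensorProduct.comm k H H).toLinearMap ∘ₗ map Hh.antipode Hh.antipode ∘ₗ Hh.comul

noncomputable def convC (f g : H →ₗ[k] H ⊗[k] H) : H →ₗ[k] H ⊗[k] H :=
  lift2 Hh ∘ₗ map f g ∘ₗ Hh.comul

@[simp] theorem mul2_tmul (a b c d : H) :
    mul2 Hh (a ⊗ₜ[k] b) (c ⊗ₜ[k] d) = Hh.mul a c ⊗ₜ[k] Hh.mul b d := by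
  simp [mul2, biTensor]

@[simp] theorem aut2_tmul (a b : H) :
    aut2 Hh (a ⊗ₜ[k] b) = Hh.aut a ⊗ₜ[k] Hh.aut b := by
  simp [aut2]

theorem aut2_aut2 (x : H ⊗[k] H) : aut2 Hh (aut2 Hh x) = x := by
  induction x using TensorProduct.induction_on with
  | zero => simp
  | tmul a b => simp [aut_aut]
  | add u v hu hv => simp [hu, hv]

theorem mul2_one2 (x : H ⊗[k] H) : mul2 Hh x (one2 Hh) = aut2 Hh x := by
  induction x using TensorProduct.induction_on with
  | zero => simp
  | tmul a b => simp [one2, Hh.mul_one]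
  | add u v hu hv => simp [map_add, LinearMap.add_apply, hu, hv]

theorem one2_mul2 (x : H ⊗[k] H) : mul2 Hh (one2 Hh) x = aut2 Hh x := by
  induction x using TensorProduct.induction_on with
  | zero => simp
  | tmul a b => simp [one2, Hh.one_mul]
  | add u v hu hv => simp [hu, hv]

theorem hom_assoc2 (x y z : H ⊗[k] H) :
    mul2 Hh (aut2 Hh x) (mul2 Hh y z) = mul2 Hh (mul2 Hh x y) (aut2 Hh z) := by
  induction x using TensorProduct.induction_on with
  | zero => simp
  | add u v hu hv => simp [map_add, LinearMap.add_apply, hu, hv]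
  | tmul a b =>
    induction y using TensorProduct.induction_on with
    | zero => simp
    | add u v hu hv => simp_all [map_add, LinearMap.add_apply]
    | tmul c d =>
      induction z using TensorProduct.induction_on with
      | zero => simp
      | add u v hu hv => simp_all [map_add, LinearMap.add_apply]
      | tmul e f => simp [Hh.hom_assoc]

theorem commmap {M N P Q : Type u} [AddCommGroup M] [Module k M] [AddCommGroup N] [Module k N]
    [AddCommGroup P] [Module k P] [AddCommGroup Q] [Module k Q]
    (f : M →ₗ[k] P) (g : N →ₗ[k] Q) (w : M ⊗[k] N) :
    TensorProduct.comm k P Q (map f g w) = map g f (TensorProduct.comm k M N w) := by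
  induction w using TensorProduct.induction_on with
  | zero => simp
  | tmul a b => simp
  | add u v hu hv => simp [hu, hv]

theorem lift2_comul (w : H ⊗[k] H) :
    lift2 Hh (map Hh.comul Hh.comul w) = Hh.comul (TensorProduct.lift Hh.mul w) := by
  induction w using TensorProduct.induction_on with
  | zero => simp
  | tmul a b => simp [lift2, Hh.comul_mul, mul2]
  | add u v hu hv => simp [hu, hv]

theorem conv_unit_right (f : H →ₗ[k] H ⊗[k] H)
    (hf : ∀ x, f (Hh.aut x) = aut2 Hh (f x)) : convC Hh f (eC Hh) = f := by
  apply LinearMap.ext; intro c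
  have key : ∀ w : H ⊗[k] H, lift2 Hh (map f (eC Hh) w) = aut2 Hh (f (cR Hh w)) := by
    intro w
    induction w using TensorProduct.induction_on with
    | zero => simp
    | tmul x y => simp [lift2, eC, mul2_one2]
    | add u v hu hv => simp [hu, hv]
  simp only [convC, LinearMap.comp_apply]
  rw [key, cR_comul, aut_symm_apply, hf, aut2_aut2]

theorem conv_unit_left (g : H →ₗ[k] H ⊗[k] H)
    (hg : ∀ x, g (Hh.aut x) = aut2 Hh (g x)) : convC Hh (eC Hh) g = g := by
  apply LinearMap.ext; intro c
  have key : ∀ w : H ⊗[k] H, lift2 Hh (map (eC Hh) g w) = aut2 Hh (g (cL Hh w)) := by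
    intro w
    induction w using TensorProduct.induction_on with
    | zero => simp
    | tmul x y => simp [lift2, eC, one2_mul2]
    | add u v hu hv => simp [hu, hv]
  simp only [convC, LinearMap.comp_apply]
  rw [key, cL_comul, aut_symm_apply, hg, aut2_aut2]

/-- the basic re-association of the coassociativity axiom -/
theorem seedA (c : H) :
    map Hh.comul LinearMap.id (Hh.comul c)
      = map LinearMap.id Hh.aut.symm.toLinearMap
          ((TensorProduct.assoc k H H H).symm
            (map Hh.aut.symm.toLinearMap Hh.comul (Hh.comul c))) := by
  have AX := Hh.hom_coassoc c
  have h2 : map Hh.comul Hh.aut.toLinearMap (Hh.comul c)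
      = (TensorProduct.assoc k H H H).symm
          (map Hh.aut.symm.toLinearMap Hh.comul (Hh.comul c)) := by
    rw [AX]; simp
  calc map Hh.comul LinearMap.id (Hh.comul c)
      = map LinearMap.id Hh.aut.symm.toLinearMap
          (map Hh.comul Hh.aut.toLinearMap (Hh.comul c)) := by
        rw [mapmap]
        exact mapcongr (fun x => by simp) (fun y => by simp) _
    _ = _ := by rw [h2]

theorem conv_assoc (f g h' : H →ₗ[k] H ⊗[k] H)
    (hf : ∀ x, f (Hh.aut x) = aut2 Hh (f x))
    (hh' : ∀ x, h' (Hh.aut x) = aut2 Hh (h' x)) :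
    convC Hh (convC Hh f g) h' = convC Hh f (convC Hh g h') := by
  apply LinearMap.ext; intro c
  have CA : ∀ V : H ⊗[k] (H ⊗[k] H),
      lift2 Hh (map (lift2 Hh ∘ₗ map f g) (h' ∘ₗ Hh.aut.symm.toLinearMap)
        ((TensorProduct.assoc k H H H).symm V))
      = lift2 Hh (map (f ∘ₗ Hh.aut.toLinearMap) (lift2 Hh ∘ₗ map g h') V) := by
    intro V
    induction V using TensorProduct.induction_on with
    | zero => simp
    | add u v hu hv => simp [hu, hv]
    | tmul x w =>
      induction w using TensorProduct.induction_on with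
      | zero => simp
      | add u v hu hv => simp [tmul_add, hu, hv]
      | tmul y z =>
        simp only [assoc_symm_tmul, map_tmul, LinearMap.comp_apply, lift2, lift.tmul,
          LinearEquiv.coe_coe]
        rw [aut_symm_apply, hh', hf, hom_assoc2]
  have s1 : map (lift2 Hh ∘ₗ map f g ∘ₗ Hh.comul) h' (Hh.comul c)
      = map (lift2 Hh ∘ₗ map f g) (h' ∘ₗ Hh.aut.symm.toLinearMap)
          ((TensorProduct.assoc k H H H).symm
            (map Hh.aut.symm.toLinearMap Hh.comul (Hh.comul c))) := by
    calc map (lift2 Hh ∘ₗ map f g ∘ₗ Hh.comul) h' (Hh.comul c)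
        = map (lift2 Hh ∘ₗ map f g) h' (map Hh.comul LinearMap.id (Hh.comul c)) := by
          rw [mapmap]
          exact mapcongr (fun x => by simp) (fun y => by simp) _
      _ = _ := by
          rw [seedA, mapmap]
          exact mapcongr (fun x => by simp) (fun y => rfl) _
  have s2 : map f (lift2 Hh ∘ₗ map g h' ∘ₗ Hh.comul) (Hh.comul c)
      = map (f ∘ₗ Hh.aut.toLinearMap) (lift2 Hh ∘ₗ map g h')
          (map Hh.aut.symm.toLinearMap Hh.comul (Hh.comul c)) := by
    rw [mapmap]
    exact mapcongr (fun x => by simp) (fun y => by simp) _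
  simp only [convC, LinearMap.comp_apply]
  rw [s1, s2, CA]

theorem convDS_comul : convC Hh (DS Hh) Hh.comul = eC Hh := by
  apply LinearMap.ext; intro c
  simp only [convC, LinearMap.comp_apply]
  have s1 : map (DS Hh) Hh.comul (Hh.comul c)
      = map Hh.comul Hh.comul (map Hh.antipode LinearMap.id (Hh.comul c)) := by
    rw [mapmap]
    exact mapcongr (fun x => by simp [DS]) (fun y => by simp) _
  rw [s1, lift2_comul, Hh.antipode_convolution]
  simp [eC, one2, Hh.comul_one]

end Conv
end HomProof
namespace HomProof
open TensorProduct LinearMap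

section Helpers2
variable {k : Type v} [CommRing k]

theorem assoc_nat {M1 M2 M3 N1 N2 N3 : Type*}
    [AddCommGroup M1] [Module k M1] [AddCommGroup M2] [Module k M2]
    [AddCommGroup M3] [Module k M3] [AddCommGroup N1] [Module k N1]
    [AddCommGroup N2] [Module k N2] [AddCommGroup N3] [Module k N3]
    (f1 : M1 →ₗ[k] N1) (f2 : M2 →ₗ[k] N2) (f3 : M3 →ₗ[k] N3) (w : (M1 ⊗[k] M2) ⊗[k] M3) :
    TensorProduct.assoc k N1 N2 N3 (map (map f1 f2) f3 w)
      = map f1 (map f2 f3) (TensorProduct.assoc k M1 M2 M3 w) := by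
  induction w using TensorProduct.induction_on with
  | zero => simp
  | tmul a c =>
    induction a using TensorProduct.induction_on with
    | zero => simp
    | tmul a1 a2 => simp
    | add u v hu hv =>
      simp only [map_tmul] at hu hv
      simp [add_tmul, hu, hv]
  | add u v hu hv => simp [hu, hv]

theorem assoc_symm_nat {M1 M2 M3 N1 N2 N3 : Type*}
    [AddCommGroup M1] [Module k M1] [AddCommGroup M2] [Module k M2]
    [AddCommGroup M3] [Module k M3] [AddCommGroup N1] [Module k N1]
    [AddCommGroup N2] [Module k N2] [AddCommGroup N3] [Module k N3]
    (f1 : M1 →ₗ[k] N1) (f2 : M2 →ₗ[k] N2) (f3 : M3 →ₗ[k] N3) (w : M1 ⊗[k] (M2 ⊗[k] M3)) :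
    (TensorProduct.assoc k N1 N2 N3).symm (map f1 (map f2 f3) w)
      = map (map f1 f2) f3 ((TensorProduct.assoc k M1 M2 M3).symm w) := by
  induction w using TensorProduct.induction_on with
  | zero => simp
  | tmul a c =>
    induction c using TensorProduct.induction_on with
    | zero => simp
    | tmul c1 c2 => simp
    | add u v hu hv =>
      simp only [map_tmul] at hu hv
      simp [tmul_add, hu, hv]
  | add u v hu hv => simp [hu, hv]

end Helpers2

section AntiComul
variable {k : Type v} [CommRing k] {H : Type u} [AddCommGroup H] [Module k H]
variable (Hh : HomHopfAlgebra k H)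

theorem DCmain (u : H) :
    map LinearMap.id (Hh.comul ∘ₗ Hh.aut.toLinearMap) (Hh.comul u)
      = TensorProduct.assoc k H H H
          (map (Hh.comul ∘ₗ Hh.aut.toLinearMap) LinearMap.id (Hh.comul u)) := by
  have AX := Hh.hom_coassoc u
  calc map LinearMap.id (Hh.comul ∘ₗ Hh.aut.toLinearMap) (Hh.comul u)
      = map (Hh.aut.toLinearMap ∘ₗ Hh.aut.symm.toLinearMap)
          ((map Hh.aut.toLinearMap Hh.aut.toLinearMap) ∘ₗ Hh.comul) (Hh.comul u) := by
        exact mapcongr (fun x => by simp) (fun y => by simp [Hh.comul_aut]) _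
    _ = map Hh.aut.toLinearMap (map Hh.aut.toLinearMap Hh.aut.toLinearMap)
          (map Hh.aut.symm.toLinearMap Hh.comul (Hh.comul u)) := by rw [mapmap]
    _ = map Hh.aut.toLinearMap (map Hh.aut.toLinearMap Hh.aut.toLinearMap)
          (TensorProduct.assoc k H H H (map Hh.comul Hh.aut.toLinearMap (Hh.comul u))) := by
        rw [AX]
    _ = TensorProduct.assoc k H H H
          (map (map Hh.aut.toLinearMap Hh.aut.toLinearMap) Hh.aut.toLinearMap
            (map Hh.comul Hh.aut.toLinearMap (Hh.comul u))) := by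
        rw [assoc_nat]
    _ = TensorProduct.assoc k H H H
          (map ((map Hh.aut.toLinearMap Hh.aut.toLinearMap) ∘ₗ Hh.comul)
            (Hh.aut.toLinearMap ∘ₗ Hh.aut.toLinearMap) (Hh.comul u)) := by
        rw [mapmap]
    _ = _ := by
        congr 1
        exact mapcongr (fun x => by simp [← Hh.comul_aut]) (fun y => by simp [aut_aut]) _

noncomputable def Xi3 : H ⊗[k] (H ⊗[k] (H ⊗[k] H)) →ₗ[k] H ⊗[k] H :=
  lift2 Hh ∘ₗ
    map LinearMap.id ((TensorProduct.comm k H H).toLinearMap ∘ₗ map Hh.antipode Hh.antipode) ∘ₗ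
    (TensorProduct.assoc k H H (H ⊗[k] H)).symm.toLinearMap

@[simp] theorem Xi3_tmul (x a b d : H) :
    Xi3 Hh (x ⊗ₜ[k] (a ⊗ₜ[k] (b ⊗ₜ[k] d)))
      = Hh.mul x (Hh.antipode d) ⊗ₜ[k] Hh.mul a (Hh.antipode b) := by
  simp [Xi3, lift2]

noncomputable def Xi4 : H ⊗[k] (H ⊗[k] H) →ₗ[k] H ⊗[k] H :=
  map (TensorProduct.lift Hh.mul ∘ₗ map LinearMap.id Hh.antipode) Hh.aut.toLinearMap ∘ₗ
    (TensorProduct.assoc k H H H).symm.toLinearMap ∘ₗ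
    map LinearMap.id (TensorProduct.comm k H H).toLinearMap

@[simp] theorem Xi4_tmul (x c d : H) :
    Xi4 Hh (x ⊗ₜ[k] (c ⊗ₜ[k] d)) = Hh.mul x (Hh.antipode d) ⊗ₜ[k] Hh.aut c := by
  simp [Xi4]

noncomputable def Xi5 : H ⊗[k] H →ₗ[k] H ⊗[k] H :=
  ((TensorProduct.mk k H H).flip Hh.one) ∘ₗ TensorProduct.lift Hh.mul ∘ₗ
    map LinearMap.id Hh.antipode

@[simp] theorem Xi5_tmul (x u : H) :
    Xi5 Hh (x ⊗ₜ[k] u) = Hh.mul x (Hh.antipode u) ⊗ₜ[k] Hh.one := by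
  simp [Xi5]

noncomputable def cvS : H →ₗ[k] H :=
  TensorProduct.lift Hh.mul ∘ₗ map LinearMap.id Hh.antipode ∘ₗ Hh.comul

theorem R1 (D : H ⊗[k] H) :
    lift2 Hh (map LinearMap.id (gm Hh ∘ₗ Hh.aut.symm.toLinearMap)
        ((TensorProduct.assoc k H H H).symm (map LinearMap.id Hh.comul D)))
      = Xi3 Hh (map LinearMap.id
          ((map LinearMap.id (Hh.comul ∘ₗ Hh.aut.symm.toLinearMap)) ∘ₗ Hh.comul) D) := by
  induction D using TensorProduct.induction_on with
  | zero => simp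
  | add u v hu hv => simp [hu, hv]
  | tmul x u =>
    simp only [map_tmul, LinearMap.comp_apply, LinearMap.id_apply]
    generalize Hh.comul u = w
    induction w using TensorProduct.induction_on with
    | zero => simp
    | add u' v' hu hv => simp [tmul_add, hu, hv]
    | tmul u1 u2 =>
      simp only [map_tmul, LinearMap.comp_apply, LinearMap.id_apply, assoc_symm_tmul,
        lift2, lift.tmul, gm, LinearEquiv.coe_coe]
      generalize Hh.comul (Hh.aut.symm u2) = w2
      induction w2 using TensorProduct.induction_on with
      | zero => simp
      | add u' v' hu hv => simp [tmul_add, hu, hv]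
      | tmul b d => simp [lift2]

theorem R2 (D : H ⊗[k] H) :
    Xi3 Hh (map LinearMap.id
        ((TensorProduct.assoc k H H H).toLinearMap ∘ₗ
          map (Hh.comul ∘ₗ Hh.aut.toLinearMap) LinearMap.id ∘ₗ Hh.comul) D)
      = Xi4 Hh (map LinearMap.id ((map (cvS Hh) LinearMap.id) ∘ₗ Hh.comul) D) := by
  induction D using TensorProduct.induction_on with
  | zero => simp
  | add u v hu hv => simp [hu, hv]
  | tmul x u =>
    simp only [map_tmul, LinearMap.comp_apply, LinearMap.id_apply, LinearEquiv.coe_coe]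
    generalize Hh.comul u = w
    induction w using TensorProduct.induction_on with
    | zero => simp
    | add u' v' hu hv => simp [tmul_add, hu, hv]
    | tmul u1 u2 =>
      simp only [map_tmul, LinearMap.comp_apply, LinearMap.id_apply, cvS,
        LinearEquiv.coe_coe, Hh.comul_aut]
      generalize Hh.comul u1 = w3
      induction w3 using TensorProduct.induction_on with
      | zero => simp
      | add u' v' hu hv => simp [add_tmul, tmul_add, hu, hv]
      | tmul e f =>
        simp only [map_tmul, LinearMap.id_apply, assoc_tmul, Xi3_tmul, lift.tmul,
          LinearEquiv.coe_coe, Xi4_tmul]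
        rw [Hh.aut_mul, Hh.antipode_aut]

theorem R3 (D : H ⊗[k] H) :
    Xi4 Hh (map LinearMap.id
        ((map (Hh.counit.smulRight Hh.one) LinearMap.id) ∘ₗ Hh.comul) D)
      = Xi5 Hh (map LinearMap.id (cL Hh ∘ₗ Hh.comul) D) := by
  induction D using TensorProduct.induction_on with
  | zero => simp
  | add u v hu hv => simp [hu, hv]
  | tmul x u =>
    simp only [map_tmul, LinearMap.comp_apply, LinearMap.id_apply]
    generalize Hh.comul u = w
    induction w using TensorProduct.induction_on with
    | zero => simp
    | add u' v' hu hv => simp [tmul_add, hu, hv]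
    | tmul u1 u2 =>
      simp only [map_tmul, LinearMap.id_apply, LinearMap.smulRight_apply, cL_tmul]
      simp [smul_tmul', tmul_smul, Hh.aut_one]

theorem R4 (w : H ⊗[k] H) :
    Xi5 Hh (map Hh.aut.symm.toLinearMap Hh.aut.symm.toLinearMap w)
      = Hh.aut (TensorProduct.lift Hh.mul (map LinearMap.id Hh.antipode w)) ⊗ₜ[k] Hh.one := by
  induction w using TensorProduct.induction_on with
  | zero => simp
  | add u v hu hv => simp [hu, hv, add_tmul]
  | tmul c1 c2 =>
    simp only [map_tmul, Xi5_tmul, lift.tmul, LinearMap.id_apply, LinearEquiv.coe_coe]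
    rw [aut_symm_apply, aut_symm_apply, Hh.aut_mul, Hh.antipode_aut]

theorem convcomul_gm : convC Hh Hh.comul (gm Hh) = eC Hh := by
  apply LinearMap.ext; intro c
  simp only [convC, LinearMap.comp_apply]
  have t3 : ∀ X : (H ⊗[k] H) ⊗[k] H,
      map LinearMap.id (gm Hh) (map LinearMap.id Hh.aut.symm.toLinearMap X)
        = map LinearMap.id (gm Hh ∘ₗ Hh.aut.symm.toLinearMap) X := by
    intro X; rw [mapmap]; exact mapcongr (fun x => by simp) (fun y => rfl) _
  calc lift2 Hh (map Hh.comul (gm Hh) (Hh.comul c))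
      = lift2 Hh (map LinearMap.id (gm Hh) (map Hh.comul LinearMap.id (Hh.comul c))) := by
        rw [mapmap]; exact congrArg _ (mapcongr (fun x => rfl) (fun y => rfl) _)
    _ = lift2 Hh (map LinearMap.id (gm Hh ∘ₗ Hh.aut.symm.toLinearMap)
          ((TensorProduct.assoc k H H H).symm
            (map Hh.aut.symm.toLinearMap Hh.comul (Hh.comul c)))) := by
        rw [seedA, t3]
    _ = lift2 Hh (map LinearMap.id (gm Hh ∘ₗ Hh.aut.symm.toLinearMap)
          ((TensorProduct.assoc k H H H).symm
            (map LinearMap.id Hh.comul (map Hh.aut.symm.toLinearMap LinearMap.id (Hh.comul c))))) := by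
        have t4 : map Hh.aut.symm.toLinearMap Hh.comul (Hh.comul c)
            = map LinearMap.id Hh.comul
                (map Hh.aut.symm.toLinearMap LinearMap.id (Hh.comul c)) := by
          rw [mapmap]
          exact mapcongr (fun x => by simp) (fun y => rfl) _
        rw [t4]
    _ = Xi3 Hh (map LinearMap.id
          ((map LinearMap.id (Hh.comul ∘ₗ Hh.aut.symm.toLinearMap)) ∘ₗ Hh.comul)
          (map Hh.aut.symm.toLinearMap LinearMap.id (Hh.comul c))) := R1 Hh _
    _ = Xi3 Hh (map LinearMap.id
          ((TensorProduct.assoc k H H H).toLinearMap ∘ₗ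
            map (Hh.comul ∘ₗ Hh.aut.toLinearMap) LinearMap.id ∘ₗ Hh.comul)
          (map Hh.aut.symm.toLinearMap LinearMap.id (Hh.comul c))) := by
        refine congrArg _ (mapcongr (fun x => rfl) (fun u => ?_) _)
        simp only [LinearMap.comp_apply, LinearEquiv.coe_coe]
        have : map LinearMap.id (Hh.comul ∘ₗ Hh.aut.symm.toLinearMap) (Hh.comul u)
            = map LinearMap.id (Hh.comul ∘ₗ Hh.aut.toLinearMap) (Hh.comul u) :=
          mapcongr (fun x => rfl) (fun y => by simp [aut_symm_apply]) _
        rw [this, DCmain]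
    _ = Xi4 Hh (map LinearMap.id ((map (cvS Hh) LinearMap.id) ∘ₗ Hh.comul)
          (map Hh.aut.symm.toLinearMap LinearMap.id (Hh.comul c))) := R2 Hh _
    _ = Xi4 Hh (map LinearMap.id
          ((map (Hh.counit.smulRight Hh.one) LinearMap.id) ∘ₗ Hh.comul)
          (map Hh.aut.symm.toLinearMap LinearMap.id (Hh.comul c))) := by
        refine congrArg _ (mapcongr (fun x => rfl) (fun u => ?_) _)
        simp only [LinearMap.comp_apply]
        exact mapcongr (fun x => by
          simpa [cvS] using Hh.convolution_antipode x) (fun y => rfl) _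
    _ = Xi5 Hh (map LinearMap.id (cL Hh ∘ₗ Hh.comul)
          (map Hh.aut.symm.toLinearMap LinearMap.id (Hh.comul c))) := R3 Hh _
    _ = Xi5 Hh (map Hh.aut.symm.toLinearMap Hh.aut.symm.toLinearMap (Hh.comul c)) := by
        rw [mapmap]
        exact congrArg _ (mapcongr (fun x => by simp) (fun u => by
          simp only [LinearMap.comp_apply, LinearMap.id_apply]
          rw [cL_comul]
          simp) _)
    _ = Hh.aut (TensorProduct.lift Hh.mul (map LinearMap.id Hh.antipode (Hh.comul c)))
          ⊗ₜ[k] Hh.one := R4 Hh _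
    _ = eC Hh c := by
        rw [Hh.convolution_antipode]
        simp [eC, one2, smul_tmul', Hh.aut_one]

theorem comul_antipode (z : H) :
    Hh.comul (Hh.antipode z)
      = TensorProduct.comm k H H (map Hh.antipode Hh.antipode (Hh.comul z)) := by
  have HDS : ∀ x, DS Hh (Hh.aut x) = aut2 Hh (DS Hh x) := fun x => by
    simp [DS, Hh.antipode_aut, Hh.comul_aut, aut2]
  have Hgm : ∀ x, gm Hh (Hh.aut x) = aut2 Hh (gm Hh x) := by
    intro x
    simp only [gm, LinearMap.comp_apply, LinearEquiv.coe_coe, Hh.comul_aut]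
    rw [mapmap]
    rw [mapcongr (f' := Hh.aut.toLinearMap ∘ₗ Hh.antipode) (g' := Hh.aut.toLinearMap ∘ₗ Hh.antipode)
      (fun y => by simp [Hh.antipode_aut]) (fun y => by simp [Hh.antipode_aut]) _]
    rw [← mapmap, commmap]
    simp [aut2]
  have main : DS Hh = gm Hh := by
    calc DS Hh = convC Hh (DS Hh) (eC Hh) := (conv_unit_right Hh _ HDS).symm
      _ = convC Hh (DS Hh) (convC Hh Hh.comul (gm Hh)) := by rw [convcomul_gm]
      _ = convC Hh (convC Hh (DS Hh) Hh.comul) (gm Hh) :=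
          (conv_assoc Hh _ _ _ HDS Hgm).symm
      _ = convC Hh (eC Hh) (gm Hh) := by rw [convDS_comul]
      _ = gm Hh := conv_unit_left Hh _ Hgm
  have := LinearMap.congr_fun main z
  simpa [DS, gm] using this

end AntiComul
end HomProof
namespace HomProof
open TensorProduct LinearMap

section Mside
variable {k : Type v} [CommRing k] {H A : Type u}
  [AddCommGroup H] [Module k H] [AddCommGroup A] [Module k A]
variable (Hh : HomHopfAlgebra k H) (AA : HomComoduleAlgebra k Hh A)
variable (Φ : TotalIntegral k Hh AA)
variable {M : Type u} [AddCommGroup M] [Module k M] (Mm : RelHopfModule k Hh AA M)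

theorem MULa (w : H ⊗[k] H) :
    TensorProduct.lift Hh.mul (map Hh.aut.toLinearMap Hh.aut.toLinearMap w)
      = Hh.aut (TensorProduct.lift Hh.mul w) := by
  induction w using TensorProduct.induction_on with
  | zero => simp
  | tmul a b => simp [Hh.aut_mul]
  | add u v hu hv => simp [hu, hv]

/-- `K'(x ⊗ y) = φ(S(α x) · y)` -/
noncomputable def Kp : H ⊗[k] H →ₗ[k] A :=
  Φ.toFun ∘ₗ TensorProduct.lift Hh.mul ∘ₗ
    map (Hh.antipode ∘ₗ Hh.aut.toLinearMap) LinearMap.id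

@[simp] theorem Kp_tmul (x y : H) :
    Kp Hh AA Φ (x ⊗ₜ[k] y) = Φ.toFun (Hh.mul (Hh.antipode (Hh.aut x)) y) := by
  simp [Kp]

/-- the map `λ(m ⊗ h) = μ⁻¹?… : act(m₀, φ(S(α m₁) h))` -/
noncomputable def lam : M ⊗[k] H →ₗ[k] M :=
  TensorProduct.lift Mm.act ∘ₗ map LinearMap.id (Kp Hh AA Φ) ∘ₗ
    (TensorProduct.assoc k M H H).toLinearMap ∘ₗ map Mm.coact LinearMap.id

theorem lam_tmul (m : M) (h : H) :
    lam Hh AA Φ Mm (m ⊗ₜ[k] h)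
      = TensorProduct.lift Mm.act (map LinearMap.id (Kp Hh AA Φ)
          (TensorProduct.assoc k M H H (Mm.coact m ⊗ₜ[k] h))) := by
  simp [lam]

theorem KpJ (x : H) :
    Kp Hh AA Φ (map LinearMap.id Hh.aut.toLinearMap (Hh.comul x))
      = Hh.counit x • AA.one := by
  simp only [Kp, LinearMap.comp_apply]
  rw [mapmap]
  rw [mapcongr (f' := Hh.aut.toLinearMap ∘ₗ Hh.antipode) (g' := Hh.aut.toLinearMap)
    (fun y => by simp [Hh.antipode_aut]) (fun y => by simp) _]
  have e2 : map (Hh.aut.toLinearMap ∘ₗ Hh.antipode) Hh.aut.toLinearMap (Hh.comul x)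
      = map Hh.aut.toLinearMap Hh.aut.toLinearMap
          (map Hh.antipode LinearMap.id (Hh.comul x)) := by
    rw [mapmap]
    exact mapcongr (fun y => rfl) (fun y => rfl) _
  rw [e2, MULa, Hh.antipode_convolution]
  simp [Hh.aut_one, Φ.normal]

/-- generic derived form of the comodule Hom-coassociativity -/
theorem DMgen {P : Type u} [AddCommGroup P] [Module k P]
    (autP : P ≃ₗ[k] P) (coact : P →ₗ[k] P ⊗[k] H)
    (hca : ∀ m, TensorProduct.assoc k P H H
        (map coact Hh.aut.symm.toLinearMap (coact m))
        = map autP.symm.toLinearMap Hh.comul (coact m)) (m : P) :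
    TensorProduct.assoc k P H H (map coact LinearMap.id (coact m))
      = map autP.symm.toLinearMap
          ((map LinearMap.id Hh.aut.toLinearMap) ∘ₗ Hh.comul) (coact m) := by
  have e1 : map coact LinearMap.id (coact m)
      = map (map LinearMap.id LinearMap.id) Hh.aut.toLinearMap
          (map coact Hh.aut.symm.toLinearMap (coact m)) := by
    rw [mapmap]
    exact mapcongr (fun x => by rw [LinearMap.comp_apply, TensorProduct.map_id]; rfl)
      (fun y => by simp) _
  rw [e1, assoc_nat, hca, mapmap]
  exact mapcongr (fun x => by simp) (fun y => rfl) _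

theorem QuadM :
    ∀ m : M, map LinearMap.id (map LinearMap.id Hh.comul)
        (TensorProduct.assoc k M H H (map Mm.coact LinearMap.id (Mm.coact m)))
      = map Mm.aut.symm.toLinearMap
          ((TensorProduct.assoc k H H H).toLinearMap ∘ₗ
            map (Hh.comul ∘ₗ Hh.aut.toLinearMap) LinearMap.id ∘ₗ Hh.comul)
          (Mm.coact m) := by
  intro m
  rw [DMgen Hh Mm.aut Mm.coact Mm.hom_coassoc m, mapmap]
  refine mapcongr (fun x => by simp) (fun u => ?_) _
  simp only [LinearMap.comp_apply, LinearEquiv.coe_coe]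
  rw [mapmap, ← DCmain]
  exact mapcongr (fun x => rfl) (fun y => rfl) _

theorem CPT (w : M ⊗[k] A) :
    Mm.coact (TensorProduct.lift Mm.act w)
      = TensorProduct.lift (biTensor Mm.act Hh.mul) (map Mm.coact AA.coact w) := by
  induction w using TensorProduct.induction_on with
  | zero => simp
  | tmul m a => simpa using Mm.compat m a
  | add u v hu hv => simp [hu, hv]

/-- `G3((x ⊗ x') ⊗ (y ⊗ y')) = φ(S(αx')y) ⊗ S(αx)y'` -/
noncomputable def G3 : (H ⊗[k] H) ⊗[k] (H ⊗[k] H) →ₗ[k] A ⊗[k] H :=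
  map Φ.toFun LinearMap.id ∘ₗ lift2 Hh ∘ₗ
    map ((TensorProduct.comm k H H).toLinearMap ∘ₗ
      map (Hh.antipode ∘ₗ Hh.aut.toLinearMap) (Hh.antipode ∘ₗ Hh.aut.toLinearMap))
      LinearMap.id

@[simp] theorem G3_tmul (x x' y y' : H) :
    G3 Hh AA Φ ((x ⊗ₜ[k] x') ⊗ₜ[k] (y ⊗ₜ[k] y'))
      = Φ.toFun (Hh.mul (Hh.antipode (Hh.aut x')) y)
          ⊗ₜ[k] Hh.mul (Hh.antipode (Hh.aut x)) y' := by
  simp [G3, lift2]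

theorem CPA (v : H ⊗[k] H) :
    AA.coact (Kp Hh AA Φ v) = G3 Hh AA Φ (map Hh.comul Hh.comul v) := by
  induction v using TensorProduct.induction_on with
  | zero => simp
  | add u v hu hv => simp [hu, hv]
  | tmul x y =>
    simp only [Kp_tmul, map_tmul]
    rw [Φ.colinear]
    have e1 : Hh.comul (Hh.mul (Hh.antipode (Hh.aut x)) y)
        = mul2 Hh (Hh.comul (Hh.antipode (Hh.aut x))) (Hh.comul y) := Hh.comul_mul _ _
    rw [e1, comul_antipode, Hh.comul_aut, mapmap]
    simp only [G3, LinearMap.comp_apply, map_tmul, LinearMap.id_apply, lift2, lift.tmul,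
      LinearEquiv.coe_coe]

noncomputable def liftB : (M ⊗[k] H) ⊗[k] (A ⊗[k] H) →ₗ[k] M ⊗[k] H :=
  TensorProduct.lift (biTensor Mm.act Hh.mul)

@[simp] theorem liftB_tmul (m : M) (x : H) (a : A) (y : H) :
    liftB Hh AA Mm ((m ⊗ₜ[k] x) ⊗ₜ[k] (a ⊗ₜ[k] y))
      = Mm.act m a ⊗ₜ[k] Hh.mul x y := by
  simp [liftB, biTensor]

/-- `Th1((m' ⊗ (a ⊗ (x ⊗ x'))) ⊗ (y ⊗ y')) = act m' (φ(S(αx')y)) ⊗ a·(S(αx)y')` -/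
noncomputable def Th1 : (M ⊗[k] (H ⊗[k] (H ⊗[k] H))) ⊗[k] (H ⊗[k] H) →ₗ[k] M ⊗[k] H :=
  liftB Hh AA Mm ∘ₗ map LinearMap.id (G3 Hh AA Φ) ∘ₗ
    (TensorProduct.assoc k (M ⊗[k] H) (H ⊗[k] H) (H ⊗[k] H)).toLinearMap ∘ₗ
    map (TensorProduct.assoc k M H (H ⊗[k] H)).symm.toLinearMap LinearMap.id

@[simp] theorem Th1_tmul (m' : M) (a x x' y y' : H) :
    Th1 Hh AA Φ Mm ((m' ⊗ₜ[k] (a ⊗ₜ[k] (x ⊗ₜ[k] x'))) ⊗ₜ[k] (y ⊗ₜ[k] y'))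
      = Mm.act m' (Φ.toFun (Hh.mul (Hh.antipode (Hh.aut x')) y))
          ⊗ₜ[k] Hh.mul a (Hh.mul (Hh.antipode (Hh.aut x)) y') := by
  simp [Th1]

/-- `Th3((m' ⊗ (c ⊗ d)) ⊗ (y ⊗ y')) = act m' (φ(S(αd)y)) ⊗ c·α(y')` -/
noncomputable def Th3 : (M ⊗[k] (H ⊗[k] H)) ⊗[k] (H ⊗[k] H) →ₗ[k] M ⊗[k] H :=
  liftB Hh AA Mm ∘ₗ
    map LinearMap.id
      (map (Φ.toFun ∘ₗ TensorProduct.lift Hh.mul ∘ₗ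
          map (Hh.antipode ∘ₗ Hh.aut.toLinearMap) LinearMap.id) Hh.aut.toLinearMap ∘ₗ
        (TensorProduct.assoc k H H H).symm.toLinearMap) ∘ₗ
    (TensorProduct.assoc k (M ⊗[k] H) H (H ⊗[k] H)).toLinearMap ∘ₗ
    map (TensorProduct.assoc k M H H).symm.toLinearMap LinearMap.id

@[simp] theorem Th3_tmul (m' : M) (c d y y' : H) :
    Th3 Hh AA Φ Mm ((m' ⊗ₜ[k] (c ⊗ₜ[k] d)) ⊗ₜ[k] (y ⊗ₜ[k] y'))
      = Mm.act m' (Φ.toFun (Hh.mul (Hh.antipode (Hh.aut d)) y))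
          ⊗ₜ[k] Hh.mul c (Hh.aut y') := by
  simp [Th3]

/-- `Th7((m' ⊗ x) ⊗ (y ⊗ y')) = act m' (φ(S(αx)y)) ⊗ y'` -/
noncomputable def Th7 : (M ⊗[k] H) ⊗[k] (H ⊗[k] H) →ₗ[k] M ⊗[k] H :=
  map (TensorProduct.lift Mm.act) LinearMap.id ∘ₗ
    (TensorProduct.assoc k M A H).symm.toLinearMap ∘ₗ
    map LinearMap.id
      ((map (Kp Hh AA Φ) LinearMap.id) ∘ₗ (TensorProduct.assoc k H H H).symm.toLinearMap) ∘ₗ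
    (TensorProduct.assoc k M H (H ⊗[k] H)).toLinearMap

@[simp] theorem Th7_tmul (m' : M) (x y y' : H) :
    Th7 Hh AA Φ Mm ((m' ⊗ₜ[k] x) ⊗ₜ[k] (y ⊗ₜ[k] y'))
      = Mm.act m' (Φ.toFun (Hh.mul (Hh.antipode (Hh.aut x)) y)) ⊗ₜ[k] y' := by
  simp [Th7]

end Mside
end HomProof
namespace HomProof
open TensorProduct LinearMap

section Mside2
variable {k : Type v} [CommRing k] {H A : Type u}
  [AddCommGroup H] [Module k H] [AddCommGroup A] [Module k A]
variable (Hh : HomHopfAlgebra k H) (AA : HomComoduleAlgebra k Hh A)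
variable (Φ : TotalIntegral k Hh AA)
variable {M : Type u} [AddCommGroup M] [Module k M] (Mm : RelHopfModule k Hh AA M)

theorem coactsymm {P : Type u} [AddCommGroup P] [Module k P]
    (autP : P ≃ₗ[k] P) (coact : P →ₗ[k] P ⊗[k] H)
    (hca : ∀ m, coact (autP m) = map autP.toLinearMap Hh.aut.toLinearMap (coact m))
    (m : P) :
    coact (autP.symm m)
      = map autP.symm.toLinearMap Hh.aut.symm.toLinearMap (coact m) := by
  have h1 := hca (autP.symm m)
  rw [autP.apply_symm_apply] at h1
  have h2 : map autP.symm.toLinearMap Hh.aut.symm.toLinearMap (coact m)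
      = coact (autP.symm m) := by
    rw [h1, mapmap]
    rw [mapcongr (f' := LinearMap.id) (g' := LinearMap.id)
      (fun x => by simp) (fun y => by simp) _, TensorProduct.map_id]
    rfl
  exact h2.symm

theorem lam_aut (w : M ⊗[k] H) :
    lam Hh AA Φ Mm (map Mm.aut.toLinearMap Hh.aut.toLinearMap w)
      = Mm.aut (lam Hh AA Φ Mm w) := by
  induction w using TensorProduct.induction_on with
  | zero => simp
  | add u v hu hv => simp [hu, hv]
  | tmul m h =>
    simp only [map_tmul, LinearEquiv.coe_coe]
    rw [lam_tmul, lam_tmul, Mm.coact_aut]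
    generalize Mm.coact m = v
    induction v using TensorProduct.induction_on with
    | zero => simp
    | add u v hu hv => simp [add_tmul, hu, hv]
    | tmul m0 x =>
      simp only [map_tmul, assoc_tmul, LinearMap.id_apply, lift.tmul, Kp_tmul,
        LinearEquiv.coe_coe]
      rw [Mm.aut_act, aut_aut]
      congr 1
      conv_rhs => rw [← Φ.commutes, Hh.aut_mul, ← Hh.antipode_aut, aut_aut]

theorem lam_coact (m : M) : lam Hh AA Φ Mm (Mm.coact m) = Mm.aut.symm m := by
  have FIN1 : ∀ v : M ⊗[k] H,
      TensorProduct.lift Mm.act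
        (map Mm.aut.symm.toLinearMap (Hh.counit.smulRight AA.one) v)
      = TensorProduct.rid k M (map LinearMap.id Hh.counit v) := by
    intro v
    induction v using TensorProduct.induction_on with
    | zero => simp
    | add u v hu hv => simp [hu, hv]
    | tmul m' x =>
      simp only [map_tmul, lift.tmul, LinearMap.smulRight_apply, LinearMap.id_apply,
        LinearEquiv.coe_coe, rid_tmul, map_smul]
      rw [Mm.act_one, Mm.aut.apply_symm_apply]
  simp only [lam, LinearMap.comp_apply, LinearEquiv.coe_coe]
  rw [DMgen Hh Mm.aut Mm.coact Mm.hom_coassoc m, mapmap]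
  rw [mapcongr (f' := Mm.aut.symm.toLinearMap) (g' := Hh.counit.smulRight AA.one)
    (fun x => by simp) (fun y => by
      simp only [LinearMap.comp_apply]
      exact KpJ Hh AA Φ y) _]
  rw [FIN1]
  exact Mm.counit_coact m

theorem CL3 (u : M ⊗[k] H) (h : H) :
    liftB Hh AA Mm (map Mm.coact ((G3 Hh AA Φ) ∘ₗ map Hh.comul Hh.comul)
        (TensorProduct.assoc k M H H (u ⊗ₜ[k] h)))
      = Th1 Hh AA Φ Mm ((map LinearMap.id (map LinearMap.id Hh.comul)
          (TensorProduct.assoc k M H H (map Mm.coact LinearMap.id u)))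
            ⊗ₜ[k] Hh.comul h) := by
  induction u using TensorProduct.induction_on with
  | zero => simp
  | add u v hu hv => simp [add_tmul, hu, hv]
  | tmul m' x =>
    simp only [assoc_tmul, map_tmul, LinearMap.comp_apply, LinearMap.id_apply,
      LinearEquiv.coe_coe]
    generalize Mm.coact m' = v
    induction v using TensorProduct.induction_on with
    | zero => simp
    | add u v hu hv => simp_all [map_add, add_tmul, tmul_add]
    | tmul m0 a =>
      simp only [assoc_tmul, map_tmul, LinearMap.id_apply]
      generalize Hh.comul x = w1
      generalize Hh.comul h = w2
      induction w1 using TensorProduct.induction_on with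
      | zero => simp
      | add u v hu hv => simp_all [map_add, add_tmul, tmul_add]
      | tmul x1 x2 =>
        induction w2 using TensorProduct.induction_on with
        | zero => simp
        | add u v hu hv => simp_all [map_add, add_tmul, tmul_add]
        | tmul y y' => simp

theorem CL4 (v : M ⊗[k] H) (w2 : H ⊗[k] H) :
    Th1 Hh AA Φ Mm ((map Mm.aut.symm.toLinearMap
        ((TensorProduct.assoc k H H H).toLinearMap ∘ₗ
          map (Hh.comul ∘ₗ Hh.aut.toLinearMap) LinearMap.id ∘ₗ Hh.comul) v) ⊗ₜ[k] w2)
      = Th3 Hh AA Φ Mm ((map Mm.aut.symm.toLinearMap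
          ((map (cvS Hh) LinearMap.id) ∘ₗ Hh.comul) v) ⊗ₜ[k] w2) := by
  induction v using TensorProduct.induction_on with
  | zero => simp
  | add u v hu hv => simp_all [map_add, add_tmul, tmul_add]
  | tmul m' x =>
    simp only [map_tmul, LinearMap.comp_apply, LinearEquiv.coe_coe]
    generalize Hh.comul x = w
    induction w using TensorProduct.induction_on with
    | zero => simp
    | add u v hu hv => simp_all [map_add, add_tmul, tmul_add]
    | tmul x1 x2 =>
      simp only [map_tmul, LinearMap.id_apply, LinearMap.comp_apply,
        LinearEquiv.coe_coe, Hh.comul_aut, cvS]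
      generalize Hh.comul x1 = w3
      induction w3 using TensorProduct.induction_on with
      | zero => simp
      | add u v hu hv => simp_all [map_add, add_tmul, tmul_add]
      | tmul e f =>
        induction w2 using TensorProduct.induction_on with
        | zero => simp
        | add u v hu hv => simp_all [map_add, add_tmul, tmul_add]
        | tmul y y' =>
          simp only [map_tmul, LinearMap.id_apply, assoc_tmul, Th1_tmul, Th3_tmul,
            lift.tmul, LinearEquiv.coe_coe]
          rw [aut_aut, Hh.hom_assoc]

theorem CL6 (v : M ⊗[k] H) (w2 : H ⊗[k] H) :
    Th3 Hh AA Φ Mm ((map Mm.aut.symm.toLinearMap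
        ((map (Hh.counit.smulRight Hh.one) LinearMap.id) ∘ₗ Hh.comul) v) ⊗ₜ[k] w2)
      = Th7 Hh AA Φ Mm ((map Mm.aut.symm.toLinearMap (cL Hh ∘ₗ Hh.comul) v) ⊗ₜ[k] w2) := by
  induction v using TensorProduct.induction_on with
  | zero => simp
  | add u v hu hv => simp_all [map_add, add_tmul, tmul_add]
  | tmul m' x =>
    simp only [map_tmul, LinearMap.comp_apply, LinearEquiv.coe_coe]
    generalize Hh.comul x = w
    induction w using TensorProduct.induction_on with
    | zero => simp
    | add u v hu hv => simp_all [map_add, add_tmul, tmul_add]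
    | tmul x1 x2 =>
      induction w2 using TensorProduct.induction_on with
      | zero => simp
      | add u v hu hv => simp_all [map_add, add_tmul, tmul_add]
      | tmul y y' =>
        simp only [map_tmul, LinearMap.id_apply, LinearMap.smulRight_apply, cL_tmul]
        simp only [← smul_tmul', tmul_smul, map_smul, Th3_tmul, Th7_tmul]
        rw [Hh.one_mul, aut_aut]

theorem CL8 (z : M) (w2 : H ⊗[k] H) :
    map (lam Hh AA Φ Mm) LinearMap.id ((TensorProduct.assoc k M H H).symm (z ⊗ₜ[k] w2))
      = Th7 Hh AA Φ Mm (Mm.coact z ⊗ₜ[k] w2) := by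
  induction w2 using TensorProduct.induction_on with
  | zero => simp
  | add u v hu hv => simp_all [map_add, add_tmul, tmul_add]
  | tmul y y' =>
    simp only [assoc_symm_tmul, map_tmul, LinearMap.id_apply]
    rw [lam_tmul]
    generalize Mm.coact z = v
    induction v using TensorProduct.induction_on with
    | zero => simp
    | add u v hu hv => simp [add_tmul, hu, hv]
    | tmul m0 x => simp

theorem lam_colinear (w : M ⊗[k] H) :
    Mm.coact (lam Hh AA Φ Mm w)
      = map (lam Hh AA Φ Mm) LinearMap.id
          ((TensorProduct.assoc k M H H).symm
            (map Mm.aut.symm.toLinearMap Hh.comul w)) := by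
  induction w using TensorProduct.induction_on with
  | zero => simp
  | add u v hu hv => simp [hu, hv]
  | tmul m h =>
    have CPT' : ∀ w : M ⊗[k] A,
        Mm.coact (TensorProduct.lift Mm.act w)
          = liftB Hh AA Mm (map Mm.coact AA.coact w) := fun w => CPT Hh AA Mm w
    rw [lam_tmul, CPT']
    have s1 : map Mm.coact AA.coact
        (map LinearMap.id (Kp Hh AA Φ) (TensorProduct.assoc k M H H (Mm.coact m ⊗ₜ[k] h)))
        = map Mm.coact ((G3 Hh AA Φ) ∘ₗ map Hh.comul Hh.comul)
            (TensorProduct.assoc k M H H (Mm.coact m ⊗ₜ[k] h)) := by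
      rw [mapmap]
      exact mapcongr (fun x => rfl)
        (fun y => by simp only [LinearMap.comp_apply]; exact CPA Hh AA Φ y) _
    rw [s1, CL3]
    rw [QuadM Hh AA Mm m]
    rw [CL4]
    have s5 : map Mm.aut.symm.toLinearMap ((map (cvS Hh) LinearMap.id) ∘ₗ Hh.comul)
        (Mm.coact m)
        = map Mm.aut.symm.toLinearMap
            ((map (Hh.counit.smulRight Hh.one) LinearMap.id) ∘ₗ Hh.comul) (Mm.coact m) :=
      mapcongr (fun x => rfl) (fun u => by
        simp only [LinearMap.comp_apply]
        exact mapcongr (fun x => by simpa [cvS] using Hh.convolution_antipode x)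
          (fun y => rfl) _) _
    rw [s5, CL6]
    have s7 : map Mm.aut.symm.toLinearMap (cL Hh ∘ₗ Hh.comul) (Mm.coact m)
        = map Mm.aut.symm.toLinearMap Hh.aut.symm.toLinearMap (Mm.coact m) :=
      mapcongr (fun x => rfl)
        (fun u => by simp only [LinearMap.comp_apply]; rw [cL_comul]; rfl) _
    rw [s7]
    have s9 : Mm.coact (Mm.aut.symm m)
        = map Mm.aut.symm.toLinearMap Hh.aut.symm.toLinearMap (Mm.coact m) :=
      coactsymm Hh Mm.aut Mm.coact Mm.coact_aut m
    rw [← s9]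
    simp only [map_tmul, LinearEquiv.coe_coe]
    exact (CL8 Hh AA Φ Mm (Mm.aut.symm m) (Hh.comul h)).symm

end Mside2
end HomProof

section Statements

variable {k : Type v} [CommRing k] {H A : Type u}
  [AddCommGroup H] [Module k H] [AddCommGroup A] [Module k A]

open HomProof

/-- If there is a total integral `φ : (H,α) → (A,β)`, then every relative
Hom-Hopf module `(M,μ)` is injective as a right `(H,α)`-Hom-comodule relative to
`k`-split monomorphisms. -/
theorem relHopfModule_injective_comodule
    {M N P : Type u} [AddCommGroup M] [Module k M] [AddCommGroup N] [Module k N]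
    [AddCommGroup P] [Module k P]
    (Hh : HomHopfAlgebra k H) (AA : HomComoduleAlgebra k Hh A)
    (Φ : TotalIntegral k Hh AA) (Mm : RelHopfModule k Hh AA M)
    (Nc : HomComodule k Hh N) (Pc : HomComodule k Hh P)
    (i : N →ₗ[k] P) (hi : IsHomComoduleHom Nc Pc i)
    (p : P →ₗ[k] N) (hpi : p.comp i = LinearMap.id)
    (hp_aut : ∀ x, p (Pc.aut x) = Nc.aut (p x))
    (f : N →ₗ[k] M) (hf : IsHomComoduleHom Nc Mm.toHomComodule f) :
    ∃ g : P →ₗ[k] M, IsHomComoduleHom Pc Mm.toHomComodule g ∧ g.comp i = f := by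
  have hcoact : Mm.toHomComodule.coact = Mm.coact := rfl
  have haut : Mm.toHomComodule.aut = Mm.aut := rfl
  have hp_symm : ∀ y, p (Pc.aut.symm y) = Nc.aut.symm (p y) := by
    intro y
    have h1 := hp_aut (Pc.aut.symm y)
    rw [Pc.aut.apply_symm_apply] at h1
    rw [h1, Nc.aut.symm_apply_apply]
  have hf_symm : ∀ n, f (Nc.aut.symm n) = Mm.aut.symm (f n) := by
    intro n
    have h1 := hf.1 (Nc.aut.symm n)
    rw [Nc.aut.apply_symm_apply, haut] at h1
    rw [h1, Mm.aut.symm_apply_apply]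
  refine ⟨Mm.aut.toLinearMap ∘ₗ HomProof.lam Hh AA Φ Mm ∘ₗ
      TensorProduct.map (f ∘ₗ p) LinearMap.id ∘ₗ Pc.coact, ⟨?_, ?_⟩, ?_⟩
  · -- automorphism compatibility
    intro x
    simp only [LinearMap.comp_apply, LinearEquiv.coe_coe, haut]
    rw [Pc.coact_aut]
    have e1 : TensorProduct.map (f ∘ₗ p) LinearMap.id
          (TensorProduct.map Pc.aut.toLinearMap Hh.aut.toLinearMap (Pc.coact x))
        = TensorProduct.map Mm.aut.toLinearMap Hh.aut.toLinearMap
            (TensorProduct.map (f ∘ₗ p) LinearMap.id (Pc.coact x)) := by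
      rw [mapmap, mapmap]
      refine mapcongr (fun y => ?_) (fun y => rfl) _
      simp only [LinearMap.comp_apply, LinearEquiv.coe_coe]
      rw [hp_aut, hf.1, haut]
    rw [e1, lam_aut]
  · -- colinearity
    apply LinearMap.ext; intro x
    simp only [LinearMap.comp_apply, LinearEquiv.coe_coe, hcoact]
    rw [Mm.coact_aut, lam_colinear]
    have O2gen : ∀ v : P ⊗[k] H,
        TensorProduct.map Mm.aut.toLinearMap Hh.aut.toLinearMap
          (TensorProduct.map (HomProof.lam Hh AA Φ Mm) LinearMap.id
            ((TensorProduct.assoc k M H H).symm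
              (TensorProduct.map Mm.aut.symm.toLinearMap Hh.comul
                (TensorProduct.map (f ∘ₗ p) LinearMap.id v))))
        = TensorProduct.map (Mm.aut.toLinearMap ∘ₗ HomProof.lam Hh AA Φ Mm ∘ₗ
              TensorProduct.map (f ∘ₗ p) LinearMap.id) LinearMap.id
            ((TensorProduct.assoc k P H H).symm
              (TensorProduct.map Pc.aut.symm.toLinearMap
                ((TensorProduct.map LinearMap.id Hh.aut.toLinearMap) ∘ₗ Hh.comul) v)) := by
      intro v
      induction v using TensorProduct.induction_on with
      | zero => simp
      | add u v hu hv => simp [hu, hv]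
      | tmul p' y =>
        simp only [TensorProduct.map_tmul, LinearMap.comp_apply, LinearMap.id_apply,
          LinearEquiv.coe_coe]
        generalize Hh.comul y = w
        induction w using TensorProduct.induction_on with
        | zero => simp
        | add u v hu hv => simp_all [map_add, TensorProduct.tmul_add, TensorProduct.add_tmul]
        | tmul y1 y2 =>
          simp only [TensorProduct.map_tmul, TensorProduct.assoc_symm_tmul,
            LinearMap.id_apply, LinearMap.comp_apply, LinearEquiv.coe_coe]
          rw [hp_symm, hf_symm]
    have DP := DMgen Hh Pc.aut Pc.coact Pc.hom_coassoc x
    have rhs1 : TensorProduct.map (Mm.aut.toLinearMap ∘ₗ HomProof.lam Hh AA Φ Mm ∘ₗ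
          TensorProduct.map (f ∘ₗ p) LinearMap.id ∘ₗ Pc.coact) LinearMap.id (Pc.coact x)
        = TensorProduct.map (Mm.aut.toLinearMap ∘ₗ HomProof.lam Hh AA Φ Mm ∘ₗ
            TensorProduct.map (f ∘ₗ p) LinearMap.id) LinearMap.id
            ((TensorProduct.assoc k P H H).symm
              (TensorProduct.map Pc.aut.symm.toLinearMap
                ((TensorProduct.map LinearMap.id Hh.aut.toLinearMap) ∘ₗ Hh.comul)
                (Pc.coact x))) := by
      have e2 : TensorProduct.map Pc.coact LinearMap.id (Pc.coact x)
          = (TensorProduct.assoc k P H H).symm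
              (TensorProduct.map Pc.aut.symm.toLinearMap
                ((TensorProduct.map LinearMap.id Hh.aut.toLinearMap) ∘ₗ Hh.comul)
                (Pc.coact x)) := by
        rw [← DP]; simp
      rw [← e2, mapmap]
      exact mapcongr (fun a => rfl) (fun b => rfl) _
    rw [rhs1]
    exact O2gen (Pc.coact x)
  · -- section property
    apply LinearMap.ext; intro n
    simp only [LinearMap.comp_apply, LinearEquiv.coe_coe]
    have e1 : Pc.coact (i n) = TensorProduct.map i LinearMap.id (Nc.coact n) :=
      LinearMap.congr_fun hi.2 n
    rw [e1, mapmap]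
    have e3 : TensorProduct.map ((f ∘ₗ p) ∘ₗ i) (LinearMap.id ∘ₗ LinearMap.id)
          (Nc.coact n)
        = TensorProduct.map f LinearMap.id (Nc.coact n) := by
      refine mapcongr (fun y => ?_) (fun y => rfl) _
      simp only [LinearMap.comp_apply]
      have h4 := LinearMap.congr_fun hpi y
      simp only [LinearMap.comp_apply, LinearMap.id_apply] at h4
      rw [h4]
    rw [e3]
    have e2 : TensorProduct.map f LinearMap.id (Nc.coact n) = Mm.coact (f n) :=
      (LinearMap.congr_fun hf.2 n).symm
    rw [e2, lam_coact, Mm.aut.apply_symm_apply]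


end Statements
end
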